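/- arXiv:math/0507362 — 5 statements merged into one kernel-verified Lean document; each statement's English description precedes it below -/
import Mathlib

section
/- Let n ≥ 1, c ≥ 1, and e ≥ 0 be integers. If c < Σ_{i=0}^{e} (n + 1 - i), then c^{<n>} ≤ c + e. -/
/-- The largest `m` with `C(m, d) ≤ c`: the leading entry `k_d` of the Macaulay
representation of `c` in degree `d` (for `c, d ≥ 1`). -/
def maxBin (c d : ℕ) : ℕ := Nat.findGreatest (fun m => m.choose d ≤ c) (c + d)

/-- `mSub c d = c_{<d>}`: if `c = Sum_{i=f}^{d} C(k i, i)` is the Macaulay representation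
of `c` in degree `d` (computed greedily: `k d` is the largest `m` with `C(m,d) ≤ c`, etc.),
then `c_{<d>} = Sum_{i=f}^{d} C(k i - 1, i)`; by convention `0_{<d>} = 0`. -/
def mSub : ℕ → ℕ → ℕ
  | _, 0 => 0
  | c, d + 1 =>
    if c = 0 then 0
    else (maxBin c (d + 1) - 1).choose (d + 1) + mSub (c - (maxBin c (d + 1)).choose (d + 1)) d

/-- `mUp c d = c^{<d>}`: if `c = Sum_{i=f}^{d} C(k i, i)` is the Macaulay representation
of `c` in degree `d` (computed greedily), then `c^{<d>} = Sum_{i=f}^{d} C(k i + 1, i + 1)`;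
by convention `0^{<d>} = 0`. -/
def mUp : ℕ → ℕ → ℕ
  | _, 0 => 0
  | c, d + 1 =>
    if c = 0 then 0
    else (maxBin c (d + 1) + 1).choose (d + 2) + mUp (c - (maxBin c (d + 1)).choose (d + 1)) d

lemma choose_big (c : ℕ) : ∀ d, 1 ≤ d → c + 1 ≤ (c + d).choose d := by
  intro d
  induction d with
  | zero => omega
  | succ d ih =>
    intro _
    rcases Nat.eq_zero_or_pos d with h | h
    · simp [h]
    · calc c + 1 ≤ (c + d).choose d := ih h
        _ ≤ (c + d).choose d + (c + d).choose (d + 1) := Nat.le_add_right _ _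
        _ = (c + d + 1).choose (d + 1) := (Nat.choose_succ_succ _ _).symm
        _ = (c + (d + 1)).choose (d + 1) := by ring_nf

lemma maxBin_ge (c d : ℕ) (hc : 1 ≤ c) : d ≤ maxBin c d :=
  Nat.le_findGreatest (by omega) (by simpa [Nat.choose_self] using hc)

lemma maxBin_spec (c d : ℕ) (hc : 1 ≤ c) : (maxBin c d).choose d ≤ c :=
  Nat.findGreatest_spec (P := fun m => m.choose d ≤ c) (m := d) (by omega)
    (by simpa [Nat.choose_self] using hc)

lemma maxBin_lt_top (c d : ℕ) (hc : 1 ≤ c) (hd : 1 ≤ d) : maxBin c d < c + d := by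
  have hle : maxBin c d ≤ c + d := Nat.findGreatest_le _
  rcases Nat.lt_or_ge (maxBin c d) (c + d) with h | h
  · exact h
  · exfalso
    have heq : maxBin c d = c + d := le_antisymm hle h
    have hP : (c + d).choose d ≤ c := heq ▸ maxBin_spec c d hc
    have := choose_big c d hd
    omega

lemma lt_choose_succ_maxBin (c d : ℕ) (hc : 1 ≤ c) (hd : 1 ≤ d) :
    c < (maxBin c d + 1).choose d := by
  have h := Nat.findGreatest_is_greatest (P := fun m => m.choose d ≤ c)
    (n := c + d) (k := maxBin c d + 1) (Nat.lt_succ_self _)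
    (maxBin_lt_top c d hc hd)
  simpa using Nat.lt_of_not_le h

lemma mUp_zero (d : ℕ) : mUp 0 d = 0 := by cases d <;> simp [mUp]

lemma choose_succ_self_right' (n : ℕ) : (n + 1).choose n = n + 1 := by
  rw [← Nat.choose_symm (by omega : n ≤ n + 1)]
  simp

lemma choose_two_above (n : ℕ) : (n + 2).choose n = (n + 2) * (n + 1) / 2 := by
  rw [← Nat.choose_symm (by omega : n ≤ n + 2)]
  have h2 : n + 2 - n = 2 := by omega
  rw [h2, Nat.choose_two_right]
  congr 1

/-- The key natural-number version, by strong induction on `n`. -/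
lemma mUp_key : ∀ n : ℕ, 1 ≤ n → ∀ c e : ℕ, 1 ≤ c → e ≤ n →
    c < ∑ i ∈ Finset.range (e + 1), (n + 1 - i) → mUp c n ≤ c + e := by
  intro n
  induction n using Nat.strong_induction_on with
  | _ n IH =>
    intro hn c e hc he hsum
    obtain ⟨m, rfl⟩ : ∃ m, n = m + 1 := ⟨n - 1, by omega⟩
    set n := m + 1 with hn_def
    -- bound on the sum: c < choose (n+2) n = (n+2)(n+1)/2
    have hsum_le : ∑ i ∈ Finset.range (e + 1), (n + 1 - i) ≤ (n + 2).choose n := by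
      calc ∑ i ∈ Finset.range (e + 1), (n + 1 - i)
          ≤ ∑ i ∈ Finset.range (n + 2), (n + 1 - i) :=
            Finset.sum_le_sum_of_subset (Finset.range_subset_range.mpr (by omega))
        _ = ∑ i ∈ Finset.range (n + 2), (n + 1 - (n + 2 - 1 - i)) :=
            (Finset.sum_range_reflect (fun i => n + 1 - i) (n + 2)).symm
        _ = ∑ i ∈ Finset.range (n + 2), i := by
            refine Finset.sum_congr rfl fun i hi => ?_
            simp only [Finset.mem_range] at hi
            omega
        _ = (n + 2) * (n + 2 - 1) / 2 := Finset.sum_range_id (n + 2)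
        _ = (n + 2).choose n := by rw [choose_two_above]; congr 2
    have hcbound : c < (n + 2).choose n := by omega
    have hk_ge : n ≤ maxBin c n := maxBin_ge c n hc
    have hk_spec : (maxBin c n).choose n ≤ c := maxBin_spec c n hc
    have hk_lt : c < (maxBin c n + 1).choose n := lt_choose_succ_maxBin c n hc (by omega)
    have hk_le : maxBin c n ≤ n + 1 := by
      by_contra hcon
      push_neg at hcon
      have : (n + 2).choose n ≤ (maxBin c n).choose n := Nat.choose_le_choose n hcon
      omega
    rcases Nat.eq_or_lt_of_le hk_le with hk | hk
    · -- maxBin c n = n + 1 : leading binomial C(n+1, n) = n+1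
      have hcn : n + 1 ≤ c := by
        rw [hk, choose_succ_self_right'] at hk_spec; exact hk_spec
      have he1 : 1 ≤ e := by
        by_contra hcon
        push_neg at hcon
        interval_cases e
        simp [Finset.sum_range_succ] at hsum
        omega
      set c' := c - (n + 1) with hc'_def
      have hunfold : mUp c n = (n + 2) + mUp c' m := by
        show mUp c (m + 1) = _
        rw [mUp, if_neg (by omega : c ≠ 0)]
        have h1 : maxBin c (m + 1) = n + 1 := hk
        rw [h1]
        congr 1
        · show (n + 2).choose (m + 2) = n + 2
          have : m + 2 = n + 1 := by omega
          rw [this, choose_succ_self_right']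
        · congr 1
          rw [choose_succ_self_right']
      -- split the sum: first term is n + 1
      have hsplit : ∑ i ∈ Finset.range (e + 1), (n + 1 - i)
          = (∑ i ∈ Finset.range e, (n - i)) + (n + 1) := by
        rw [Finset.sum_range_succ']
        congr 1
        exact Finset.sum_congr rfl fun i _ => by omega
      have hc'_lt : c' < ∑ i ∈ Finset.range e, (n - i) := by omega
      rcases Nat.eq_zero_or_pos c' with hc0 | hc0
      · -- c = n + 1
        rw [hunfold, hc0, mUp_zero]
        omega
      · -- c' ≥ 1, recurse at degree m with e' = e - 1 ≤ m
        have hm1 : 1 ≤ m := by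
          by_contra hcon
          push_neg at hcon
          interval_cases m
          -- n = 1, c ≥ 3 but c < choose(3,1) = 3
          rw [hk] at hk_lt
          simp [hn_def] at hk_lt
          omega
        have he'm : e - 1 ≤ m := by omega
        have hsum' : c' < ∑ i ∈ Finset.range (e - 1 + 1), (m + 1 - i) := by
          have : e - 1 + 1 = e := by omega
          rw [this]
          have : ∑ i ∈ Finset.range e, (m + 1 - i) = ∑ i ∈ Finset.range e, (n - i) :=
            Finset.sum_congr rfl fun i _ => by omega
          omega
        have := IH m (by omega) (by omega) c' (e - 1) hc0 he'm hsum'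
        omega
    · -- maxBin c n = n : leading binomial C(n, n) = 1
      have hkn : maxBin c n = n := by omega
      have hclt : c < n + 1 := by
        rw [hkn, choose_succ_self_right'] at hk_lt; exact hk_lt
      set c' := c - 1 with hc'_def
      have hunfold : mUp c n = 1 + mUp c' m := by
        show mUp c (m + 1) = _
        rw [mUp, if_neg (by omega : c ≠ 0)]
        rw [hkn]
        congr 1
        · show (n + 1).choose (m + 2) = 1
          have : m + 2 = n + 1 := by omega
          rw [this, Nat.choose_self]
        · congr 1
          rw [Nat.choose_self]
      rcases Nat.eq_zero_or_pos c' with hc0 | hc0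
      · rw [hunfold, hc0, mUp_zero]
        omega
      · -- c' ≥ 1, hence c ≥ 2, hence m ≥ 1 since c ≤ n = m + 1
        have hm1 : 1 ≤ m := by omega
        set e' := min e m with he'_def
        have hsum' : c' < ∑ i ∈ Finset.range (e' + 1), (m + 1 - i) := by
          have hfirst : m + 1 ≤ ∑ i ∈ Finset.range (e' + 1), (m + 1 - i) := by
            have h0 : (0 : ℕ) ∈ Finset.range (e' + 1) := by simp
            have := Finset.single_le_sum (f := fun i => m + 1 - i)
              (fun i _ => Nat.zero_le _) h0
            simpa using this
          omega
        have := IH m (by omega) (by omega) c' e' hc0 (by omega) hsum'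
        rw [hunfold]
        omega

/-- Let `n ≥ 1`, `c ≥ 1` and `e ≥ 0` be integers.
If `c < Sum_{i=0}^{e} (n + 1 - i)`, then `c^{<n>} ≤ c + e`. -/
theorem mUp_le_add_of_lt_sum (n c e : ℕ) (hn : 1 ≤ n) (hc : 1 ≤ c)
    (h : (c : ℤ) < ∑ i ∈ Finset.range (e + 1), ((n : ℤ) + 1 - (i : ℤ))) :
    mUp c n ≤ c + e := by
  set e' := min e n with he'_def
  -- the integer sum up to e is at most the sum up to e'
  have hmono : (∑ i ∈ Finset.range (e + 1), ((n : ℤ) + 1 - (i : ℤ)))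
      ≤ ∑ i ∈ Finset.range (e' + 1), ((n : ℤ) + 1 - (i : ℤ)) := by
    rcases le_or_gt e n with hen | hen
    · have : e' = e := by omega
      rw [this]
    · have he'n : e' = n := by omega
      rw [he'n]
      have hsplit : (∑ i ∈ Finset.Ico 0 (n + 1), ((n : ℤ) + 1 - (i : ℤ)))
          + (∑ i ∈ Finset.Ico (n + 1) (e + 1), ((n : ℤ) + 1 - (i : ℤ)))
          = ∑ i ∈ Finset.Ico 0 (e + 1), ((n : ℤ) + 1 - (i : ℤ)) :=
        Finset.sum_Ico_consecutive _ (by omega) (by omega)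
      have hnonpos : (∑ i ∈ Finset.Ico (n + 1) (e + 1), ((n : ℤ) + 1 - (i : ℤ))) ≤ 0 := by
        apply Finset.sum_nonpos
        intro i hi
        simp only [Finset.mem_Ico] at hi
        have : (n : ℤ) + 1 ≤ (i : ℤ) := by exact_mod_cast hi.1
        omega
      simp only [Finset.range_eq_Ico]
      omega
  -- convert to a natural-number inequality
  have hcast : (∑ i ∈ Finset.range (e' + 1), ((n : ℤ) + 1 - (i : ℤ)))
      = ((∑ i ∈ Finset.range (e' + 1), (n + 1 - i) : ℕ) : ℤ) := by
    rw [Nat.cast_sum]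
    refine Finset.sum_congr rfl fun i hi => ?_
    simp only [Finset.mem_range] at hi
    have hin : i ≤ n := by omega
    omega
  have hlt : c < ∑ i ∈ Finset.range (e' + 1), (n + 1 - i) := by
    rw [hcast] at hmono
    exact_mod_cast lt_of_lt_of_le h hmono
  have := mUp_key n hn c e' hc (by omega) hlt
  omega
end

section
/- Let c ≥ 1 and n ≥ 1 be integers with Macaulay representation c = Σ_{i=f}^{n} C(k_i, i). If k_i ≤ i + 1 for all i in the representation, and f_1 is the largest index i (or f-1 if none) with k_i = i, then c^{<n>} = c + n - f_1. -/
/-- `IsMacaulayRep c d f k` : `k` gives the Macaulay representation of `c` in degree `d`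
with lowest index `f`, i.e. `k d > k (d-1) > ... > k f >= f >= 1` and
`c = Sum_{i=f}^{d} C(k i, i)` (with the convention `C(m,p) = 0` for `m < p`,
which is `Nat.choose`). -/
def IsMacaulayRep (c d f : ℕ) (k : ℕ → ℕ) : Prop :=
  1 ≤ f ∧ f ≤ d ∧ (∀ i, f ≤ i → i < d → k i < k (i + 1)) ∧ f ≤ k f ∧
    c = ∑ i ∈ Finset.Icc f d, (k i).choose i

/-- Let `c = Sum_{i=f}^{n} C(k i, i)` be the Macaulay representation of `c ≥ 1` in
degree `n ≥ 1`, and suppose `k i ≤ i + 1` for every index `i` in the representation.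
If `f₁` is the largest index `i` with `k i = i` (or `f - 1` if there is none), then
`c^{<n>} = Sum_{i=f}^{n} C(k i + 1, i + 1) = c + n - f₁`. -/
theorem mUp_eq_add_of_small_rep (c n f f₁ : ℕ) (k : ℕ → ℕ) (hc : 1 ≤ c) (hn : 1 ≤ n)
    (h : IsMacaulayRep c n f k)
    (hk : ∀ i ∈ Finset.Icc f n, k i ≤ i + 1)
    (hf₁ : (f₁ = f - 1 ∧ ∀ i ∈ Finset.Icc f n, k i ≠ i) ∨
      (f₁ ∈ Finset.Icc f n ∧ k f₁ = f₁ ∧ ∀ i ∈ Finset.Icc f n, f₁ < i → k i ≠ i)) :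
    ∑ i ∈ Finset.Icc f n, (k i + 1).choose (i + 1) = c + (n - f₁) := by
  obtain ⟨hf1, hfn, hmono, hkf, hsum⟩ := h
  -- lower bound on k
  have hlb : ∀ i, f ≤ i → i ≤ n → i ≤ k i := by
    intro i
    induction i with
    | zero => intro hfi _; omega
    | succ j ih =>
      intro hfi hin
      rcases Nat.lt_or_ge f (j + 1) with hf' | hf'
      · have h1 := hmono j (by omega) (by omega)
        have h2 := ih (by omega) (by omega)
        omega
      · have hfe : f = j + 1 := by omega
        exact hfe ▸ hkf
  -- strict monotonicity quantified
  have hmono' : ∀ j, j ≤ n → ∀ i, f ≤ i → i ≤ j → k i + (j - i) ≤ k j := by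
    intro j
    induction j with
    | zero =>
      intro _ i _ hij
      have : i = 0 := by omega
      subst this; simp
    | succ m ih =>
      intro hjn i hfi hij
      rcases Nat.eq_or_lt_of_le hij with rfl | hlt
      · simp
      · have h1 := ih (by omega) i hfi (by omega)
        have h2 := hmono m (by omega) (by omega)
        omega
  have hbounds : f ≤ f₁ + 1 ∧ f₁ ≤ n := by
    rcases hf₁ with ⟨hfe, _⟩ | ⟨hmem, _⟩
    · omega
    · rw [Finset.mem_Icc] at hmem; omega
  have hiff : ∀ i ∈ Finset.Icc f n, (k i = i + 1 ↔ f₁ < i) := by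
    intro i hi
    rw [Finset.mem_Icc] at hi
    have h1 := hlb i hi.1 hi.2
    have h2 := hk i (Finset.mem_Icc.mpr hi)
    rcases hf₁ with ⟨hfe, hne⟩ | ⟨hmem, hkf₁, hne⟩
    · have := hne i (Finset.mem_Icc.mpr hi)
      constructor
      · intro _; omega
      · intro _; omega
    · rw [Finset.mem_Icc] at hmem
      constructor
      · intro hki
        by_contra hcon
        have := hmono' f₁ hmem.2 i hi.1 (by omega)
        omega
      · intro hlt
        have := hne i (Finset.mem_Icc.mpr hi) hlt
        omega
  have hterm : ∀ i ∈ Finset.Icc f n,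
      (k i + 1).choose (i + 1) = (k i).choose i + (if f₁ < i then 1 else 0) := by
    intro i hi
    have h1 := hlb i (Finset.mem_Icc.mp hi).1 (Finset.mem_Icc.mp hi).2
    have h2 := hk i hi
    by_cases hcase : f₁ < i
    · have hki : k i = i + 1 := (hiff i hi).mpr hcase
      rw [hki, if_pos hcase]
      rw [Nat.choose_succ_self_right, Nat.choose_succ_self_right]
    · have hki : k i = i := by
        have := (hiff i hi)
        omega
      rw [hki, if_neg hcase, Nat.choose_self, Nat.choose_self]
  rw [Finset.sum_congr rfl hterm, Finset.sum_add_distrib, ← hsum]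
  congr 1
  have hfe : Finset.filter (fun i => f₁ < i) (Finset.Icc f n) = Finset.Icc (f₁ + 1) n := by
    ext i
    simp only [Finset.mem_filter, Finset.mem_Icc]
    omega
  rw [← Finset.sum_filter, hfe, Finset.sum_const, smul_eq_mul, mul_one, Nat.card_Icc]
  omega
end

section
/- Let c, c', n, d be nonnegative integers with d ≥ 2 satisfying c' ≤ c'_{<d>} + (c − c')_{<d−1>} and c' ≤ c. Then c' ≤ c_{<d>}. -/
namespace GreenNumAux

/-- `Phi m d` : minimal `c` with `mSub c d ≥ m` (for `d ≥ 1`): increment the tops of the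
Macaulay representation of `m`.  By convention `Phi m 0 = m`. -/
def Phi : ℕ → ℕ → ℕ
  | m, 0 => m
  | m, e + 1 =>
    if m = 0 then 0
    else (maxBin m (e + 1) + 1).choose (e + 1) + Phi (m - (maxBin m (e + 1)).choose (e + 1)) e

lemma mSub_eq (c e : ℕ) (hc : c ≠ 0) :
    mSub c (e+1) = (maxBin c (e+1) - 1).choose (e+1)
      + mSub (c - (maxBin c (e+1)).choose (e+1)) e := by
  rw [mSub, if_neg hc]

lemma Phi_eq (m e : ℕ) (hm : m ≠ 0) :
    Phi m (e+1) = (maxBin m (e+1) + 1).choose (e+1)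
      + Phi (m - (maxBin m (e+1)).choose (e+1)) e := by
  rw [Phi, if_neg hm]

lemma pascal (k e : ℕ) (hk : 1 ≤ k) :
    k.choose (e+1) = (k-1).choose e + (k-1).choose (e+1) := by
  obtain ⟨k', rfl⟩ := Nat.exists_eq_add_of_le' hk
  simpa using Nat.choose_succ_succ k' e

lemma lt_choose_add {d k : ℕ} (hd : 1 ≤ d) (hk : d ≤ k) : k < k.choose d + d := by
  induction k with
  | zero => omega
  | succ n ih =>
    rcases Nat.lt_or_ge n d with h | h
    · have : d = n + 1 := by omega
      subst this
      simp [Nat.choose_self]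
    · have h1 := ih h
      obtain ⟨e, rfl⟩ := Nat.exists_eq_add_of_le' hd
      have h3 : (n+1).choose (e+1) = n.choose e + n.choose (e+1) := Nat.choose_succ_succ n e
      have h4 : 0 < n.choose e := Nat.choose_pos (by omega)
      omega

lemma choose_lt_choose_succ {k e : ℕ} (he : 1 ≤ e) (hk : e ≤ k) :
    k.choose e < (k+1).choose e := by
  obtain ⟨e', rfl⟩ := Nat.exists_eq_add_of_le' he
  have h3 : (k+1).choose (e'+1) = k.choose e' + k.choose (e'+1) := by
    simpa using Nat.choose_succ_succ k e'
  have h4 : 0 < k.choose e' := Nat.choose_pos (by omega)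
  omega

lemma maxBin_spec {c d : ℕ} (hc : 1 ≤ c) (hd : 1 ≤ d) :
    d ≤ maxBin c d ∧ (maxBin c d).choose d ≤ c ∧ c < (maxBin c d + 1).choose d := by
  have hdc : d ≤ c + d := Nat.le_add_left d c
  have hPd : d.choose d ≤ c := by simpa [Nat.choose_self] using hc
  refine ⟨Nat.le_findGreatest hdc hPd, Nat.findGreatest_spec (P := fun m => m.choose d ≤ c) hdc hPd, ?_⟩
  rcases le_or_gt (maxBin c d + 1) (c + d) with h | h
  · have := Nat.findGreatest_is_greatest (P := fun m => m.choose d ≤ c)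
      (Nat.lt_succ_self _) h
    simpa [maxBin] using this
  · have hle : maxBin c d ≤ c + d := Nat.findGreatest_le (P := fun m => m.choose d ≤ c) _
    have hEq : maxBin c d = c + d := by omega
    rw [hEq]
    have := lt_choose_add hd (k := c + d + 1) (by omega)
    omega

lemma le_maxBin {c d k : ℕ} (hc : 1 ≤ c) (hd : 1 ≤ d) (h : k.choose d ≤ c) :
    k ≤ maxBin c d := by
  rcases le_or_gt k d with hkd | hkd
  · exact hkd.trans (maxBin_spec hc hd).1
  · have := lt_choose_add hd (le_of_lt hkd)
    exact Nat.le_findGreatest (by omega) h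

lemma maxBin_eq {d k x : ℕ} (hd : 1 ≤ d) (hk : d ≤ k) (h1 : k.choose d ≤ x)
    (h2 : x < (k+1).choose d) : maxBin x d = k := by
  have hx : 1 ≤ x := le_trans (Nat.choose_pos hk) h1
  have hle : k ≤ maxBin x d := le_maxBin hx hd h1
  rcases Nat.eq_or_lt_of_le hle with h | h
  · omega
  · exfalso
    have hm := (maxBin_spec hx hd).2.1
    have : (k+1).choose d ≤ (maxBin x d).choose d := Nat.choose_le_choose d (by omega)
    omega

lemma mSub_zero : ∀ e, mSub 0 e = 0
  | 0 => rfl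
  | e + 1 => by rw [mSub]; simp

lemma Phi_zero : ∀ e, Phi 0 e = 0
  | 0 => rfl
  | e + 1 => by rw [Phi]; simp

lemma Phi_zero_deg (m : ℕ) : Phi m 0 = m := rfl

lemma mSub_deg_zero (c : ℕ) : mSub c 0 = 0 := rfl

lemma rem_lt {m e : ℕ} (hm : 1 ≤ m) :
    m - (maxBin m (e+1)).choose (e+1) < (maxBin m (e+1)).choose e := by
  obtain ⟨hk, h1, h2⟩ := maxBin_spec (c := m) (d := e+1) hm (by omega)
  have hp : (maxBin m (e+1) + 1).choose (e+1)
      = (maxBin m (e+1)).choose e + (maxBin m (e+1)).choose (e+1) := by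
    simpa using Nat.choose_succ_succ (maxBin m (e+1)) e
  omega

lemma mSub_le : ∀ e c, mSub c e ≤ c := by
  intro e
  induction e with
  | zero => intro c; rw [mSub_deg_zero]; omega
  | succ e ih =>
    intro c
    rcases Nat.eq_zero_or_pos c with rfl | hc
    · rw [mSub_zero]
    · rw [mSub_eq c e (by omega)]
      obtain ⟨hk, h1, h2⟩ := maxBin_spec (c := c) (d := e+1) hc (by omega)
      have h3 := ih (c - (maxBin c (e+1)).choose (e+1))
      have h4 : (maxBin c (e+1) - 1).choose (e+1) ≤ (maxBin c (e+1)).choose (e+1) :=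
        Nat.choose_le_choose _ (by omega)
      omega

lemma mSub_lt {c e : ℕ} (hc : 1 ≤ c) : mSub c (e+1) < c := by
  rw [mSub_eq c e (by omega)]
  obtain ⟨hk, h1, h2⟩ := maxBin_spec (c := c) (d := e+1) hc (by omega)
  have hp : (maxBin c (e+1)).choose (e+1)
      = (maxBin c (e+1) - 1).choose e + (maxBin c (e+1) - 1).choose (e+1) :=
    pascal _ e (by omega)
  have h3 : 0 < (maxBin c (e+1) - 1).choose e := Nat.choose_pos (by omega)
  have h4 := mSub_le e (c - (maxBin c (e+1)).choose (e+1))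
  omega

lemma bound_mSub : ∀ e k r, e ≤ k → r < (k+1).choose e → mSub r e < k.choose e := by
  intro e
  induction e with
  | zero => intro k r _ _; rw [mSub_deg_zero]; simp
  | succ e ih =>
    intro k r hk hr
    rcases Nat.eq_zero_or_pos r with rfl | hr1
    · rw [mSub_zero]; exact Nat.choose_pos hk
    · obtain ⟨hK, h1, h2⟩ := maxBin_spec (c := r) (d := e+1) hr1 (by omega)
      have hKk : maxBin r (e+1) ≤ k := by
        by_contra h
        have : (k+1).choose (e+1) ≤ (maxBin r (e+1)).choose (e+1) :=
          Nat.choose_le_choose _ (by omega)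
        omega
      have hrem := rem_lt (e := e) hr1
      have hih := ih (maxBin r (e+1) - 1) (r - (maxBin r (e+1)).choose (e+1)) (by omega)
        (by have h5 : maxBin r (e+1) - 1 + 1 = maxBin r (e+1) := by omega
            rw [h5]; exact hrem)
      have hp : (maxBin r (e+1)).choose (e+1)
          = (maxBin r (e+1) - 1).choose e + (maxBin r (e+1) - 1).choose (e+1) :=
        pascal _ e (by omega)
      have hmono : (maxBin r (e+1)).choose (e+1) ≤ k.choose (e+1) :=
        Nat.choose_le_choose _ hKk
      rw [mSub_eq r e (by omega)]
      omega

lemma bound_Phi : ∀ e k m, e ≤ k → m < k.choose e → Phi m e < (k+1).choose e := by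
  intro e
  induction e with
  | zero => intro k m _ hm; rw [Phi_zero_deg]; simpa using hm
  | succ e ih =>
    intro k m hk hm
    rcases Nat.eq_zero_or_pos m with rfl | hm1
    · rw [Phi_zero]; exact Nat.choose_pos (by omega)
    · obtain ⟨hj, h1, h2⟩ := maxBin_spec (c := m) (d := e+1) hm1 (by omega)
      have hjk : maxBin m (e+1) < k := by
        by_contra h
        have : k.choose (e+1) ≤ (maxBin m (e+1)).choose (e+1) :=
          Nat.choose_le_choose _ (by omega)
        omega
      have hrem := rem_lt (e := e) hm1
      have hih := ih (maxBin m (e+1)) (m - (maxBin m (e+1)).choose (e+1)) (by omega) hrem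
      have hp : (maxBin m (e+1) + 2).choose (e+1)
          = (maxBin m (e+1) + 1).choose e + (maxBin m (e+1) + 1).choose (e+1) := by
        simpa using Nat.choose_succ_succ (maxBin m (e+1) + 1) e
      have hmono : (maxBin m (e+1) + 2).choose (e+1) ≤ (k+1).choose (e+1) :=
        Nat.choose_le_choose _ (by omega)
      rw [Phi_eq m e (by omega)]
      omega

lemma bound_partial : ∀ e k s, e + 1 ≤ k → s < k.choose (e+1) →
    s - mSub s (e+1) ≤ (k-1).choose e := by
  intro e
  induction e with
  | zero =>
    intro k s hk hs
    rcases Nat.eq_zero_or_pos s with rfl | hs1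
    · rw [mSub_zero]; simp
    · have hmb : maxBin s 1 = s := by
        refine maxBin_eq (by omega) (by omega) ?_ ?_
        · simp [Nat.choose_one_right]
        · simp [Nat.choose_one_right]
      rw [mSub_eq s 0 (by omega), hmb, mSub_deg_zero]
      simp only [Nat.zero_add, Nat.choose_one_right, Nat.choose_zero_right]
      omega
  | succ e ih =>
    intro k s hk hs
    rcases Nat.eq_zero_or_pos s with rfl | hs1
    · rw [mSub_zero]; omega
    · obtain ⟨hj, h1, h2⟩ := maxBin_spec (c := s) (d := e+1+1) hs1 (by omega)
      have hjk : maxBin s (e+1+1) < k := by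
        by_contra h
        have : k.choose (e+1+1) ≤ (maxBin s (e+1+1)).choose (e+1+1) :=
          Nat.choose_le_choose _ (by omega)
        omega
      have hrem := rem_lt (e := e+1) hs1
      have hih := ih (maxBin s (e+1+1)) (s - (maxBin s (e+1+1)).choose (e+1+1))
        (by omega) hrem
      have hp1 : (maxBin s (e+1+1)).choose (e+1+1)
          = (maxBin s (e+1+1) - 1).choose (e+1) + (maxBin s (e+1+1) - 1).choose (e+1+1) :=
        pascal _ (e+1) (by omega)
      have hp2 : (maxBin s (e+1+1)).choose (e+1)
          = (maxBin s (e+1+1) - 1).choose e + (maxBin s (e+1+1) - 1).choose (e+1) :=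
        pascal _ e (by omega)
      have hmono : (maxBin s (e+1+1)).choose (e+1) ≤ (k-1).choose (e+1) :=
        Nat.choose_le_choose _ (by omega)
      have hle := mSub_le (e+1) (s - (maxBin s (e+1+1)).choose (e+1+1))
      rw [mSub_eq s (e+1) (by omega)]
      omega

lemma Phi_single : ∀ e k, e ≤ k → Phi (k.choose e) e = (k+1).choose e := by
  intro e
  induction e with
  | zero => intro k _; simp [Phi_zero_deg]
  | succ e _ =>
    intro k hk
    have hpos : 0 < k.choose (e+1) := Nat.choose_pos hk
    have hmb : maxBin (k.choose (e+1)) (e+1) = k :=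
      maxBin_eq (by omega) hk le_rfl (choose_lt_choose_succ (by omega) hk)
    rw [Phi_eq _ e (by omega), hmb]
    simp [Phi_zero]

lemma maxBin_one {c : ℕ} (hc : 1 ≤ c) : maxBin c 1 = c := by
  refine maxBin_eq (by omega) (by omega) ?_ ?_ <;> simp [Nat.choose_one_right]

lemma mSub_one (c : ℕ) : mSub c 1 = c - 1 := by
  rcases Nat.eq_zero_or_pos c with rfl | hc
  · rw [mSub_zero]
  · rw [mSub_eq c 0 (by omega), maxBin_one hc, mSub_deg_zero]
    simp [Nat.choose_one_right]

lemma Phi_one {c : ℕ} (hc : 1 ≤ c) : Phi c 1 = c + 1 := by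
  rw [Phi_eq c 0 (by omega), maxBin_one hc, Phi_zero_deg]
  simp [Nat.choose_one_right]

lemma E1 : ∀ e m c, Phi m (e+1) ≤ c → m ≤ mSub c (e+1) := by
  intro e
  induction e with
  | zero =>
    intro m c h
    rcases Nat.eq_zero_or_pos m with rfl | hm
    · omega
    · rw [Phi_one hm] at h
      rw [mSub_one]; omega
  | succ e ih =>
    intro m c h
    rcases Nat.eq_zero_or_pos m with rfl | hm
    · omega
    · obtain ⟨hk, hk1, hk2⟩ := maxBin_spec (c := m) (d := e+1+1) hm (by omega)
      rw [Phi_eq m (e+1) (by omega)] at h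
      have hc : 1 ≤ c := by
        have : 0 < (maxBin m (e+1+1) + 1).choose (e+1+1) := Nat.choose_pos (by omega)
        omega
      obtain ⟨hK, hK1, hK2⟩ := maxBin_spec (c := c) (d := e+1+1) hc (by omega)
      have hKk : maxBin m (e+1+1) + 1 ≤ maxBin c (e+1+1) := by
        refine le_maxBin hc (by omega) ?_
        omega
      rw [mSub_eq c (e+1) (by omega)]
      rcases Nat.eq_or_lt_of_le hKk with hEq | hLt
      · have hr : Phi (m - (maxBin m (e+1+1)).choose (e+1+1)) (e+1)
            ≤ c - (maxBin c (e+1+1)).choose (e+1+1) := by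
          rw [← hEq]; omega
        have := ih _ _ hr
        have hE : maxBin c (e+1+1) - 1 = maxBin m (e+1+1) := by omega
        rw [hE]
        omega
      · have hmono : (maxBin m (e+1+1) + 1).choose (e+1+1)
            ≤ (maxBin c (e+1+1) - 1).choose (e+1+1) := Nat.choose_le_choose _ (by omega)
        omega

lemma E2 : ∀ e m c, m ≤ mSub c (e+1) → Phi m (e+1) ≤ c := by
  intro e
  induction e with
  | zero =>
    intro m c h
    rcases Nat.eq_zero_or_pos m with rfl | hm
    · rw [Phi_zero]; omega
    · rw [mSub_one] at h
      rw [Phi_one hm]; omega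
  | succ e ih =>
    intro m c h
    rcases Nat.eq_zero_or_pos m with rfl | hm
    · rw [Phi_zero]; omega
    · have hc : 1 ≤ c := by
        by_contra hcc
        have : c = 0 := by omega
        subst this
        rw [mSub_zero] at h; omega
      obtain ⟨hK, hK1, hK2⟩ := maxBin_spec (c := c) (d := e+1+1) hc (by omega)
      rw [mSub_eq c (e+1) (by omega)] at h
      have hrlt : c - (maxBin c (e+1+1)).choose (e+1+1) < (maxBin c (e+1+1)).choose (e+1) :=
        rem_lt hc
      have hbound : mSub (c - (maxBin c (e+1+1)).choose (e+1+1)) (e+1)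
          < (maxBin c (e+1+1) - 1).choose (e+1) := by
        refine bound_mSub (e+1) (maxBin c (e+1+1) - 1) _ (by omega) ?_
        have h5 : maxBin c (e+1+1) - 1 + 1 = maxBin c (e+1+1) := by omega
        rw [h5]; exact hrlt
      have hpK : (maxBin c (e+1+1)).choose (e+1+1)
          = (maxBin c (e+1+1) - 1).choose (e+1) + (maxBin c (e+1+1) - 1).choose (e+1+1) :=
        pascal _ (e+1) (by omega)
      -- m < C(K, e+2)
      have hmK : m < (maxBin c (e+1+1)).choose (e+1+1) := by omega
      obtain ⟨hk, hk1, hk2⟩ := maxBin_spec (c := m) (d := e+1+1) hm (by omega)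
      have hkK : maxBin m (e+1+1) < maxBin c (e+1+1) := by
        by_contra hcon
        have : (maxBin c (e+1+1)).choose (e+1+1) ≤ (maxBin m (e+1+1)).choose (e+1+1) :=
          Nat.choose_le_choose _ (by omega)
        omega
      rw [Phi_eq m (e+1) (by omega)]
      rcases Nat.eq_or_lt_of_le hkK with hEq | hLt
      · -- K = k + 1
        have hs : m - (maxBin m (e+1+1)).choose (e+1+1)
            ≤ mSub (c - (maxBin c (e+1+1)).choose (e+1+1)) (e+1) := by
          have hE : maxBin c (e+1+1) - 1 = maxBin m (e+1+1) := by omega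
          rw [hE] at h
          omega
        have := ih _ _ hs
        have hE2 : maxBin m (e+1+1) + 1 = maxBin c (e+1+1) := by omega
        rw [hE2]
        omega
      · -- K ≥ k + 2
        have hrem := rem_lt (e := e+1) hm
        have hB := bound_Phi (e+1) (maxBin m (e+1+1)) (m - (maxBin m (e+1+1)).choose (e+1+1))
          (by omega) hrem
        have hp : (maxBin m (e+1+1) + 2).choose (e+1+1)
            = (maxBin m (e+1+1) + 1).choose (e+1) + (maxBin m (e+1+1) + 1).choose (e+1+1) := by
          simpa using Nat.choose_succ_succ (maxBin m (e+1+1) + 1) (e+1)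
        have hmono : (maxBin m (e+1+1) + 2).choose (e+1+1)
            ≤ (maxBin c (e+1+1)).choose (e+1+1) := Nat.choose_le_choose _ (by omega)
        omega

lemma key : ∀ e a, Phi a (e+1) ≤ a + Phi (a - mSub a (e+1)) e := by
  intro e
  induction e with
  | zero =>
    intro a
    rcases Nat.eq_zero_or_pos a with rfl | ha
    · rw [Phi_zero]; omega
    · rw [Phi_one ha, mSub_one]
      have h1 : a - (a - 1) = 1 := by omega
      rw [h1, Phi_zero_deg]
  | succ e ih =>
    intro a
    rcases Nat.eq_zero_or_pos a with rfl | ha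
    · rw [Phi_zero]; omega
    · obtain ⟨hk, hk1, hk2⟩ := maxBin_spec (c := a) (d := e+1+1) ha (by omega)
      have hs : a - (maxBin a (e+1+1)).choose (e+1+1) < (maxBin a (e+1+1)).choose (e+1) :=
        rem_lt ha
      have hmSle := mSub_le (e+1) (a - (maxBin a (e+1+1)).choose (e+1+1))
      have hpk : (maxBin a (e+1+1)).choose (e+1+1)
          = (maxBin a (e+1+1) - 1).choose (e+1) + (maxBin a (e+1+1) - 1).choose (e+1+1) :=
        pascal _ (e+1) (by omega)
      rw [mSub_eq a (e+1) (by omega)]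
      -- t := (a - C(k,e+2)) - mSub (a - C(k,e+2)) (e+1)
      have hm' : a - ((maxBin a (e+1+1) - 1).choose (e+1+1)
            + mSub (a - (maxBin a (e+1+1)).choose (e+1+1)) (e+1))
          = (maxBin a (e+1+1) - 1).choose (e+1)
            + ((a - (maxBin a (e+1+1)).choose (e+1+1))
                - mSub (a - (maxBin a (e+1+1)).choose (e+1+1)) (e+1)) := by
        omega
      rw [hm']
      have ht := bound_partial e (maxBin a (e+1+1)) (a - (maxBin a (e+1+1)).choose (e+1+1))
        (by omega) hs
      have hih := ih (a - (maxBin a (e+1+1)).choose (e+1+1))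
      rw [Phi_eq a (e+1) (by omega)]
      have hpk1 : (maxBin a (e+1+1) + 1).choose (e+1+1)
          = (maxBin a (e+1+1)).choose (e+1) + (maxBin a (e+1+1)).choose (e+1+1) := by
        simpa using Nat.choose_succ_succ (maxBin a (e+1+1)) (e+1)
      have hpk2 : (maxBin a (e+1+1)).choose (e+1)
          = (maxBin a (e+1+1) - 1).choose e + (maxBin a (e+1+1) - 1).choose (e+1) :=
        pascal _ e (by omega)
      rcases Nat.eq_or_lt_of_le ht with hEq | hLt
      · -- t = C(k-1, e): m' = C(k, e+1)
        rw [hEq]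
        have hm'' : (maxBin a (e+1+1) - 1).choose (e+1) + (maxBin a (e+1+1) - 1).choose e
            = (maxBin a (e+1+1)).choose (e+1) := by omega
        rw [Nat.add_comm ((maxBin a (e+1+1) - 1).choose (e+1)) ((maxBin a (e+1+1) - 1).choose e)] at hm'' ⊢
        rw [hm'']
        rw [Phi_single (e+1) (maxBin a (e+1+1)) (by omega)]
        have hPt : Phi ((maxBin a (e+1+1) - 1).choose e) e
            = (maxBin a (e+1+1)).choose e := by
          have := Phi_single e (maxBin a (e+1+1) - 1) (by omega)
          rw [this]
          congr 1
          omega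
        have hpk3 : (maxBin a (e+1+1) + 1).choose (e+1)
            = (maxBin a (e+1+1)).choose e + (maxBin a (e+1+1)).choose (e+1) := by
          simpa using Nat.choose_succ_succ (maxBin a (e+1+1)) e
        -- Phi s (e+1) ≤ s + Phi t e = s + C(k,e) (by hih, hEq, hPt)
        rw [hEq] at hih
        rw [hPt] at hih
        omega
      · -- t < C(k-1, e): maxBin m' (e+1) = k-1
        have hm'pos : 1 ≤ (maxBin a (e+1+1) - 1).choose (e+1)
              + ((a - (maxBin a (e+1+1)).choose (e+1+1))
                  - mSub (a - (maxBin a (e+1+1)).choose (e+1+1)) (e+1)) := by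
          have : 0 < (maxBin a (e+1+1) - 1).choose (e+1) := Nat.choose_pos (by omega)
          omega
        have hmb : maxBin ((maxBin a (e+1+1) - 1).choose (e+1)
              + ((a - (maxBin a (e+1+1)).choose (e+1+1))
                  - mSub (a - (maxBin a (e+1+1)).choose (e+1+1)) (e+1))) (e+1)
            = maxBin a (e+1+1) - 1 := by
          refine maxBin_eq (by omega) (by omega) (by omega) ?_
          have h5 : maxBin a (e+1+1) - 1 + 1 = maxBin a (e+1+1) := by omega
          rw [h5]
          omega
        have hPhiM : Phi ((maxBin a (e+1+1) - 1).choose (e+1)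
              + ((a - (maxBin a (e+1+1)).choose (e+1+1))
                  - mSub (a - (maxBin a (e+1+1)).choose (e+1+1)) (e+1))) (e+1)
            = (maxBin a (e+1+1)).choose (e+1)
              + Phi ((a - (maxBin a (e+1+1)).choose (e+1+1))
                  - mSub (a - (maxBin a (e+1+1)).choose (e+1+1)) (e+1)) e := by
          rw [Phi_eq _ e (by omega), hmb]
          have harg : (maxBin a (e+1+1) - 1).choose (e+1)
                + ((a - (maxBin a (e+1+1)).choose (e+1+1))
                    - mSub (a - (maxBin a (e+1+1)).choose (e+1+1)) (e+1))
                - (maxBin a (e+1+1) - 1).choose (e+1)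
              = (a - (maxBin a (e+1+1)).choose (e+1+1))
                  - mSub (a - (maxBin a (e+1+1)).choose (e+1+1)) (e+1) := by omega
          rw [harg]
          have h5 : maxBin a (e+1+1) - 1 + 1 = maxBin a (e+1+1) := by omega
          rw [h5]
        omega


end GreenNumAux

open GreenNumAux in
/-- Green's numerical lemma: if `c, c', d` are nonnegative integers with `d ≥ 2`,
`c' ≤ c'_{<d>} + (c - c')_{<d-1>}` and `c' ≤ c`, then `c' ≤ c_{<d>}`. -/
theorem le_mSub_of_le_add (c c' d : ℕ) (hd : 2 ≤ d)
    (h1 : c' ≤ mSub c' d + mSub (c - c') (d - 1)) (h2 : c' ≤ c) :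
    c' ≤ mSub c d := by
  obtain ⟨e, rfl⟩ : ∃ e, d = e + 2 := ⟨d - 2, by omega⟩
  rcases Nat.eq_zero_or_pos c' with rfl | hc'
  · exact Nat.zero_le _
  · have hd1 : e + 2 - 1 = e + 1 := by omega
    rw [hd1] at h1
    have hlt : mSub c' (e+2) < c' := mSub_lt hc'
    have hmle : c' - mSub c' (e+2) ≤ mSub (c - c') (e+1) := by omega
    have hE2 : Phi (c' - mSub c' (e+2)) (e+1) ≤ c - c' := E2 e _ _ hmle
    have hkey : Phi c' (e+2) ≤ c' + Phi (c' - mSub c' (e+2)) (e+1) := key (e+1) c'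
    have hfin : Phi c' (e+2) ≤ c := by omega
    exact E1 (e+1) c' c hfin
end

section
/- Let M be a Castelnuovo-Mumford regular coherent sheaf on P^N, d ≥ 1, and V ⊆ H^0(M(d)) a subspace of codimension c. For a generic hyperplane H ⊂ P^N, the image V_H of V under restriction H^0(M(d)) → H^0(M_H(d)) has codimension at most c_{<d>} in H^0(M_H(d)). -/
lemma mSub_zero (d : ℕ) : mSub 0 d = 0 := by cases d <;> simp [mSub]

lemma pascal (k d : ℕ) : (k+1).choose (d+1) = k.choose d + k.choose (d+1) := by
  simpa [Nat.succ_eq_add_one] using Nat.choose_succ_succ k d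

lemma succ_le_choose' : ∀ d k, 1 ≤ d → d ≤ k → k + 1 ≤ k.choose d + d := by
  intro d
  induction d with
  | zero => omega
  | succ d ih =>
    intro k _ hdk
    rcases Nat.exists_eq_add_of_le hdk with ⟨m, rfl⟩
    rcases Nat.eq_zero_or_pos d with hd0 | hd1
    · subst hd0; simp [Nat.choose_one_right]
    · have h1 := ih (d + m) hd1 (by omega)
      have h2 : (d + m).choose d ≤ (d + 1 + m).choose (d + 1) := by
        rw [show d + 1 + m = (d + m) + 1 by omega, pascal]
        omega
      omega

lemma maxBin_eq {c d k : ℕ} (hd : 1 ≤ d) (hdk : d ≤ k) (h1 : k.choose d ≤ c)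
    (h2 : c < (k+1).choose d) : maxBin c d = k := by
  classical
  have hbound : k ≤ c + d := by
    have := succ_le_choose' d k hd hdk
    omega
  have hge : k ≤ maxBin c d := Nat.le_findGreatest (P := fun m => m.choose d ≤ c) hbound h1
  have hP : (maxBin c d).choose d ≤ c :=
    Nat.findGreatest_spec (P := fun m => m.choose d ≤ c) hbound h1
  by_contra hne
  have hlt : k < maxBin c d := lt_of_le_of_ne hge (fun h => hne h.symm)
  have : (k+1).choose d ≤ (maxBin c d).choose d := Nat.choose_le_choose d hlt
  omega

lemma mSub_rep {d k r : ℕ} (hk : d ≤ k) (hr : r < (k+1).choose d) :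
    mSub ((k+1).choose (d+1) + r) (d+1) = k.choose (d+1) + mSub r d := by
  have hpos : 0 < (k+1).choose (d+1) := Nat.choose_pos (by omega)
  have hmb : maxBin ((k+1).choose (d+1) + r) (d+1) = k + 1 := by
    refine maxBin_eq (by omega) (by omega) (by omega) ?_
    rw [pascal (k+1) d]
    omega
  rw [mSub]
  rw [if_neg (by omega), hmb]
  have h1 : k + 1 - 1 = k := rfl
  have h2 : (k+1).choose (d+1) + r - (k+1).choose (d+1) = r := by omega
  rw [h1, h2]

lemma mSub_exists {c : ℕ} (d : ℕ) (hc : 1 ≤ c) :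
    ∃ k r, d ≤ k ∧ c = (k+1).choose (d+1) + r ∧ r < (k+1).choose d := by
  classical
  have hwit : (d+1).choose (d+1) ≤ c := by simp [Nat.choose_self]; omega
  have hb : d + 1 ≤ c + (d+1) := by omega
  have hge : d + 1 ≤ maxBin c (d+1) :=
    Nat.le_findGreatest (P := fun m => m.choose (d+1) ≤ c) hb hwit
  have hspec : (maxBin c (d+1)).choose (d+1) ≤ c :=
    Nat.findGreatest_spec (P := fun m => m.choose (d+1) ≤ c) hb hwit
  obtain ⟨k, hk⟩ : ∃ k, maxBin c (d+1) = k + 1 := ⟨maxBin c (d+1) - 1, by omega⟩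
  rw [hk] at hge hspec
  have hdk : d ≤ k := by omega
  have hub : c < (k+1+1).choose (d+1) := by
    by_contra hcon
    push_neg at hcon
    have hble : k + 2 ≤ c + (d + 1) := by
      have := succ_le_choose' (d+1) (k+1+1) (by omega) (by omega)
      omega
    have hfg : Nat.findGreatest (fun m => m.choose (d+1) ≤ c) (c + (d+1)) = k + 1 := hk
    refine Nat.findGreatest_is_greatest (P := fun m => m.choose (d+1) ≤ c)
      (n := c + (d+1)) (k := k + 2) (by omega) hble ?_
    simpa using hcon
  have hpas := pascal (k+1) d
  exact ⟨k, c - (k+1).choose (d+1), hdk, by omega, by omega⟩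

lemma mSub_le : ∀ d c, mSub c d ≤ c := by
  intro d
  induction d with
  | zero => intro c; simp [mSub]
  | succ d ih =>
    intro c
    rcases Nat.eq_zero_or_pos c with rfl | hc
    · simp [mSub_zero]
    obtain ⟨k, r, hk, rfl, hr⟩ := mSub_exists d hc
    rw [mSub_rep hk hr]
    have h1 : k.choose (d+1) ≤ (k+1).choose (d+1) := Nat.choose_le_choose _ (by omega)
    have := ih r
    omega

-- strict: for c ≥ 1, d ≥ 1, mSub c d < c
lemma mSub_lt {c d : ℕ} (hc : 1 ≤ c) (hd : 1 ≤ d) : mSub c d < c := by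
  obtain ⟨d, rfl⟩ : ∃ d', d = d' + 1 := ⟨d - 1, by omega⟩
  obtain ⟨k, r, hk, rfl, hr⟩ := mSub_exists d hc
  rw [mSub_rep hk hr]
  have hpas := pascal k d
  have h2 : 0 < k.choose d := Nat.choose_pos hk
  have := mSub_le d r
  omega

lemma mSub_one (d : ℕ) : mSub 1 (d+1) = 0 := by
  have h : mSub ((d+1).choose (d+1) + 0) (d+1) = d.choose (d+1) + mSub 0 d :=
    mSub_rep (le_refl d) (Nat.choose_pos (by omega))
  simp [Nat.choose_self, mSub_zero, Nat.choose_eq_zero_of_lt (Nat.lt_succ_self d)] at h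
  exact h

-- identity (I)
lemma mSub_choose_pred : ∀ d k, 1 ≤ d → d ≤ k → mSub ((k+1).choose d - 1) d + 1 = k.choose d := by
  intro d
  induction d with
  | zero => intro k h; omega
  | succ D ih =>
    intro k _ hk
    obtain ⟨K, rfl⟩ : ∃ K, k = K + 1 := ⟨k - 1, by omega⟩
    have hDK : D ≤ K := by omega
    have hposD : 0 < (K+1).choose D := Nat.choose_pos (by omega)
    have hr : (K+1).choose D - 1 < (K+1).choose D := by omega
    have hc : (K+1+1).choose (D+1) - 1 = (K+1).choose (D+1) + ((K+1).choose D - 1) := by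
      have hpas := pascal (K+1) D
      omega
    rw [hc, mSub_rep hDK hr]
    rcases Nat.eq_zero_or_pos D with rfl | hD
    · simp [mSub, Nat.choose_one_right]
    · have := ih K hD hDK
      have hpas := pascal K D
      omega

lemma mSub_succ_mono : ∀ d c, mSub c d ≤ mSub (c+1) d := by
  intro d
  induction d with
  | zero => intro c; simp [mSub]
  | succ D ih =>
    intro c
    rcases Nat.eq_zero_or_pos c with rfl | hc
    · simp [mSub_zero]
    obtain ⟨k, r, hk, rfl, hr⟩ := mSub_exists D hc
    rw [mSub_rep hk hr]
    rcases lt_or_ge (r+1) ((k+1).choose D) with h1 | h1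
    · have he : (k+1).choose (D+1) + r + 1 = (k+1).choose (D+1) + (r+1) := by omega
      rw [he, mSub_rep hk h1]
      have := ih r
      omega
    · have hre : r + 1 = (k+1).choose D := by omega
      have he : (k+1).choose (D+1) + r + 1 = (k+1+1).choose (D+1) + 0 := by
        have hpas := pascal (k+1) D
        omega
      rw [he, mSub_rep (show D ≤ k+1 by omega) (Nat.choose_pos (by omega))]
      rw [mSub_zero]
      have hpas := pascal k D
      have hmr : mSub r D ≤ k.choose D := by
        rcases Nat.eq_zero_or_pos D with rfl | hD
        · simp [mSub]
        · have hI := mSub_choose_pred D k hD (by omega)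
          have hre2 : r = (k+1).choose D - 1 := by omega
          rw [hre2]
          omega
      omega

lemma mSub_mono {d a b : ℕ} (h : a ≤ b) : mSub a d ≤ mSub b d := by
  induction b with
  | zero => have : a = 0 := by omega
            subst this; exact le_refl _
  | succ b ih =>
    rcases Nat.lt_or_ge a (b+1) with h1 | h1
    · exact le_trans (ih (by omega)) (mSub_succ_mono d b)
    · have : a = b + 1 := by omega
      subst this; exact le_refl _

lemma mSub_succ_le : ∀ d c, mSub (c+1) d ≤ mSub c d + 1 := by
  intro d
  induction d with
  | zero => intro c; simp [mSub]
  | succ D ih =>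
    intro c
    rcases Nat.eq_zero_or_pos c with rfl | hc
    · rw [mSub_one]; omega
    obtain ⟨k, r, hk, rfl, hr⟩ := mSub_exists D hc
    rw [mSub_rep hk hr]
    rcases lt_or_ge (r+1) ((k+1).choose D) with h1 | h1
    · have he : (k+1).choose (D+1) + r + 1 = (k+1).choose (D+1) + (r+1) := by omega
      rw [he, mSub_rep hk h1]
      have := ih r
      omega
    · have hre : r + 1 = (k+1).choose D := by omega
      have he : (k+1).choose (D+1) + r + 1 = (k+1+1).choose (D+1) + 0 := by
        have hpas := pascal (k+1) D
        omega
      rw [he, mSub_rep (show D ≤ k+1 by omega) (Nat.choose_pos (by omega))]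
      rw [mSub_zero]
      have hpas := pascal k D
      have hmr : k.choose D ≤ mSub r D + 1 := by
        rcases Nat.eq_zero_or_pos D with rfl | hD
        · simp
        · have hI := mSub_choose_pred D k hD (by omega)
          have hre2 : r = (k+1).choose D - 1 := by omega
          rw [hre2]
          omega
      omega

lemma mSub_add_le (d x : ℕ) : ∀ t, mSub (x + t) d ≤ mSub x d + t := by
  intro t
  induction t with
  | zero => simp
  | succ t ih =>
    have := mSub_succ_le d (x + t)
    have he : x + (t+1) = (x + t) + 1 := by omega
    rw [he]
    omega

lemma mSub_one_right {c : ℕ} (hc : 1 ≤ c) : mSub c 1 + 1 = c := by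
  obtain ⟨k, r, hk, rfl, hr⟩ := mSub_exists 0 hc
  have hr0 : r = 0 := by simpa using hr
  subst hr0
  rw [mSub_rep hk hr]
  simp [mSub, Nat.choose_one_right]

lemma mSub_rep' {d k r : ℕ} (h1 : d + 1 ≤ k) (hr : r < k.choose d) :
    mSub (k.choose (d+1) + r) (d+1) = (k-1).choose (d+1) + mSub r d := by
  obtain ⟨K, rfl⟩ : ∃ K, k = K + 1 := ⟨k-1, by omega⟩
  simpa using mSub_rep (show d ≤ K by omega) hr

lemma green_K4 : ∀ D c g, c = mSub c (D+1) + 1 + g →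
    mSub (mSub c (D+1) + 1) (D+1) + mSub g D + 1 ≤ mSub c (D+1) + 1 := by
  intro D
  induction D with
  | zero =>
    intro c g hcg
    simp only [Nat.zero_add] at hcg ⊢
    have hc : 1 ≤ c := by omega
    have h1 := mSub_one_right hc
    have h2 := mSub_one_right (show 1 ≤ mSub c 1 + 1 by omega)
    have h3 : mSub g 0 = 0 := rfl
    omega
  | succ D ih =>
    intro c g hcg
    have hc : 1 ≤ c := by omega
    obtain ⟨k, r, hk, hce, hr⟩ := mSub_exists (D+1) hc
    subst hce
    have hrep : mSub ((k+1).choose (D+2) + r) (D+2) = k.choose (D+2) + mSub r (D+1) :=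
      mSub_rep hk hr
    simp only [show D+1+1 = D+2 from rfl] at hcg ⊢
    rw [hrep] at hcg ⊢
    have hposk : 0 < (k+1).choose (D+1) := Nat.choose_pos (by omega)
    have hposk' : 0 < k.choose (D+1) := Nat.choose_pos hk
    have hpasK : (k+1).choose (D+2) = k.choose (D+1) + k.choose (D+2) := pascal k (D+1)
    rcases Nat.eq_zero_or_pos r with rfl | hrpos
    · -- r = 0 case
      rw [mSub_zero] at hcg ⊢
      have hg : g + 1 = k.choose (D+1) := by omega
      rcases Nat.lt_or_ge k (D+2) with hkD | hkD
      · -- k = D+1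
        have hke : k = D + 1 := by omega
        have hch : k.choose (D+1) = 1 := by rw [hke]; simp
        have hg0 : g = 0 := by omega
        have hch2 : k.choose (D+2) = 0 := Nat.choose_eq_zero_of_lt (by omega)
        simp [hch2, hg0, mSub_one, mSub_zero]
      · -- k ≥ D+2
        have hIg : mSub g (D+1) + 1 = (k-1).choose (D+1) := by
          have hI : mSub ((k-1+1).choose (D+1) - 1) (D+1) + 1 = (k-1).choose (D+1) :=
            mSub_choose_pred (D+1) (k-1) (by omega) (by omega)
          rw [show k - 1 + 1 = k by omega] at hI
          rw [show g = k.choose (D+1) - 1 by omega]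
          exact hI
        have h2 : (1:ℕ) < k.choose (D+1) := by
          calc 1 < D + 2 := by omega
          _ = (D+2).choose (D+1) := by simp [Nat.choose_succ_self_right]
          _ ≤ k.choose (D+1) := Nat.choose_le_choose _ (by omega)
        have hfirst : mSub (k.choose (D+2) + 1) (D+2) = (k-1).choose (D+2) + mSub 1 (D+1) :=
          mSub_rep' (by omega) h2
        rw [mSub_one] at hfirst
        have hpasK2 : (k-1+1).choose (D+2) = (k-1).choose (D+1) + (k-1).choose (D+2) :=
          pascal (k-1) (D+1)
        rw [show k - 1 + 1 = k by omega] at hpasK2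
        rw [add_zero, hfirst]
        omega
    · -- r ≥ 1 case
      have hs'lt : mSub r (D+1) + 1 ≤ r := mSub_lt hrpos (by omega)
      obtain ⟨g0, hrdecomp⟩ : ∃ g0, r = mSub r (D+1) + 1 + g0 := ⟨r - (mSub r (D+1) + 1), by omega⟩
      have hI : mSub ((k+1).choose (D+1) - 1) (D+1) + 1 = k.choose (D+1) :=
        mSub_choose_pred (D+1) k (by omega) hk
      have hs'le : mSub r (D+1) + 1 ≤ k.choose (D+1) := by
        have h1 : mSub r (D+1) ≤ mSub ((k+1).choose (D+1) - 1) (D+1) := mSub_mono (by omega)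
        omega
      have hpasD : (k+1).choose (D+1) = k.choose D + k.choose (D+1) := pascal k D
      have hg0le : g0 + 1 ≤ k.choose D := by
        have h1 : mSub ((k+1).choose (D+1) - 1) (D+1)
            ≤ mSub r (D+1) + ((k+1).choose (D+1) - 1 - r) := by
          have h2 := mSub_add_le (D+1) r ((k+1).choose (D+1) - 1 - r)
          rw [show r + ((k+1).choose (D+1) - 1 - r) = (k+1).choose (D+1) - 1 by omega] at h2
          exact h2
        omega
      have hgval : g = k.choose (D+1) + g0 := by omega
      rcases Nat.lt_or_ge (mSub r (D+1) + 1) (k.choose (D+1)) with hslt | hsge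
      · -- sub-case strict; then k ≥ D+2
        have hkD : D + 2 ≤ k := by
          by_contra hcon
          have hke : k = D + 1 := by omega
          rw [hke] at hslt
          simp at hslt
        have hfirst : mSub (k.choose (D+2) + (mSub r (D+1) + 1)) (D+2)
            = (k-1).choose (D+2) + mSub (mSub r (D+1) + 1) (D+1) := mSub_rep' (by omega) hslt
        have hsecond : mSub (k.choose (D+1) + g0) (D+1)
            = (k-1).choose (D+1) + mSub g0 D := by
          exact mSub_rep' (by omega) (by omega)
        have hihr := ih r g0 hrdecomp
        have hpasK3 : (k-1+1).choose (D+2) = (k-1).choose (D+1) + (k-1).choose (D+2) :=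
          pascal (k-1) (D+1)
        rw [show k - 1 + 1 = k by omega] at hpasK3
        rw [show k.choose (D+2) + mSub r (D+1) + 1 = k.choose (D+2) + (mSub r (D+1) + 1) by omega,
          hfirst, hgval, hsecond]
        omega
      · -- sub-case equal
        have hseq : mSub r (D+1) + 1 = k.choose (D+1) := by omega
        have hfirst : mSub (k.choose (D+2) + (mSub r (D+1) + 1)) (D+2) = k.choose (D+2) := by
          rw [hseq]
          have h3 : mSub ((k+1).choose (D+2) + 0) (D+2) = k.choose (D+2) + mSub 0 (D+1) :=
            mSub_rep hk hposk
          rw [show k.choose (D+2) + k.choose (D+1) = (k+1).choose (D+2) + 0 by omega,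
            h3, mSub_zero, add_zero]
        have hmg : mSub g (D+1) ≤ mSub r (D+1) := by
          have h1 : g ≤ (k+1).choose (D+1) - 1 := by omega
          have h2 : mSub g (D+1) ≤ mSub ((k+1).choose (D+1) - 1) (D+1) := mSub_mono h1
          omega
        rw [show k.choose (D+2) + mSub r (D+1) + 1 = k.choose (D+2) + (mSub r (D+1) + 1) by omega,
          hfirst]
        omega

lemma green_L {a b D : ℕ} (hb : 1 ≤ b) (h : a ≤ mSub a (D+1) + mSub b D) :
    a ≤ mSub (a + b) (D+1) := by
  by_contra hcon
  push_neg at hcon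
  have hsc : mSub (a+b) (D+1) + 1 ≤ a + b := mSub_lt (by omega) (by omega)
  obtain ⟨g, hg⟩ : ∃ g, a + b = mSub (a+b) (D+1) + 1 + g := ⟨a + b - (mSub (a+b) (D+1) + 1), by omega⟩
  have hK4 := green_K4 D (a+b) g hg
  have hmono1 : mSub a (D+1)
      ≤ mSub (mSub (a+b) (D+1) + 1) (D+1) + (a - (mSub (a+b) (D+1) + 1)) := by
    have h2 := mSub_add_le (D+1) (mSub (a+b) (D+1) + 1) (a - (mSub (a+b) (D+1) + 1))
    rw [show mSub (a+b) (D+1) + 1 + (a - (mSub (a+b) (D+1) + 1)) = a by omega] at h2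
    exact h2
  have hbg : b ≤ g := by omega
  have hmono2 : mSub b D ≤ mSub g D := mSub_mono hbg
  omega


open Module MvPolynomial

noncomputable section

-- if a polynomial vanishes on the nonvanishing locus of a nonzero polynomial, it is zero
lemma poly_zero_of_vanish {n : ℕ} {p q : MvPolynomial (Fin n) ℂ} (hp : p ≠ 0)
    (h : ∀ ℓ, eval ℓ p ≠ 0 → eval ℓ q = 0) : q = 0 := by
  have hpq : p * q = 0 := by
    apply MvPolynomial.funext
    intro ℓ
    simp only [map_mul, map_zero]
    rcases em (eval ℓ p = 0) with h0 | h0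
    · rw [h0, zero_mul]
    · rw [h ℓ h0, mul_zero]
  rcases mul_eq_zero.mp hpq with h0 | h0
  · exact absurd h0 hp
  · exact h0

lemma exists_eval_ne_zero {n : ℕ} {p : MvPolynomial (Fin n) ℂ} (hp : p ≠ 0) :
    ∃ ℓ, eval ℓ p ≠ 0 := by
  by_contra hcon
  push_neg at hcon
  exact hp (MvPolynomial.funext (q := 0) (by simpa using hcon))

lemma generic_sup_rank {Y X : Type} [AddCommGroup Y] [Module ℂ Y] [FiniteDimensional ℂ Y]
    [AddCommGroup X] [Module ℂ X] [FiniteDimensional ℂ X] (N : ℕ)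
    (s : (Fin (N+1) → ℂ) →ₗ[ℂ] Y →ₗ[ℂ] X) (V : Submodule ℂ X) :
    ∃ (ℓ₀ : Fin (N+1) → ℂ) (p : MvPolynomial (Fin (N+1)) ℂ), p ≠ 0 ∧
      (∀ ℓ, Module.finrank ℂ ↥(V ⊔ LinearMap.range (s ℓ))
          ≤ Module.finrank ℂ ↥(V ⊔ LinearMap.range (s ℓ₀))) ∧
      ∀ ℓ, MvPolynomial.eval ℓ p ≠ 0 →
        Module.finrank ℂ ↥(V ⊔ LinearMap.range (s ℓ))
          = Module.finrank ℂ ↥(V ⊔ LinearMap.range (s ℓ₀)) := by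
  classical
  set n := Module.finrank ℂ X with hn
  set T : (Fin (N+1) → ℂ) → ℕ := fun ℓ => Module.finrank ℂ ↥(V ⊔ LinearMap.range (s ℓ)) with hT
  have hTle : ∀ ℓ, T ℓ ≤ n := fun ℓ => Submodule.finrank_le _
  -- pick ℓ₀ maximizing T
  obtain ⟨ℓ₀, hmax⟩ : ∃ ℓ₀, ∀ ℓ, T ℓ ≤ T ℓ₀ := by
    set P : ℕ → Prop := fun t => ∃ ℓ, T ℓ = t with hP
    have h0 : P (T 0) := ⟨0, rfl⟩
    have hspec : P (Nat.findGreatest P n) := Nat.findGreatest_spec (hTle 0) h0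
    obtain ⟨ℓ₀, hℓ₀⟩ := hspec
    refine ⟨ℓ₀, fun ℓ => ?_⟩
    rw [hℓ₀]
    exact Nat.le_findGreatest (hTle ℓ) ⟨ℓ, rfl⟩
  -- bases
  set sV := Module.finrank ℂ ↥V with hsV
  set m := Module.finrank ℂ Y with hm
  set bV : Basis (Fin sV) ℂ ↥V := Module.finBasis ℂ ↥V with hbV
  set bY : Basis (Fin m) ℂ Y := Module.finBasis ℂ Y with hbY
  set F : (Fin (N+1) → ℂ) → (Fin sV ⊕ Fin m) → X :=
    fun ℓ => Sum.elim (fun i => ((bV i : ↥V) : X)) (fun j => s ℓ (bY j)) with hF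
  have hspan : ∀ ℓ, Submodule.span ℂ (Set.range (F ℓ)) = V ⊔ LinearMap.range (s ℓ) := by
    intro ℓ
    rw [hF]
    rw [Set.Sum.elim_range, Submodule.span_union]
    congr 1
    · have h1 : Set.range (fun i => ((bV i : ↥V) : X)) = V.subtype '' (Set.range bV) := by
        rw [← Set.range_comp]; rfl
      rw [h1, Submodule.span_image, Basis.span_eq, Submodule.map_top, Submodule.range_subtype]
    · have h1 : Set.range (fun j => s ℓ (bY j)) = (s ℓ) '' (Set.range bY) := by
        rw [← Set.range_comp]; rfl
      rw [h1, Submodule.span_image, Basis.span_eq, Submodule.map_top]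
  -- independent subfamily of F ℓ₀ of size r
  set r := T ℓ₀ with hr
  obtain ⟨bset, hbsub, hbspan, hbind⟩ := exists_linearIndependent ℂ (Set.range (F ℓ₀))
  have hbfin : bset.Finite := hbind.setFinite
  have : Fintype bset := hbfin.fintype
  have hbcard : bset.toFinset.card = r := by
    have h1 := finrank_span_set_eq_card (s := bset) hbind
    rw [hbspan, hspan ℓ₀] at h1
    have h2 : T ℓ₀ = Module.finrank ℂ ↥(V ⊔ LinearMap.range (s ℓ₀)) := rfl
    omega
  have hcard2 : Fintype.card ↥bset = r := by rw [← Set.toFinset_card]; exact hbcard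
  set en : Fin r ≃ ↥bset := (Fintype.equivFinOfCardEq hcard2).symm with hen
  have hσex : ∀ j : Fin r, ∃ u, F ℓ₀ u = ((en j : ↥bset) : X) := by
    intro j
    exact hbsub (en j).2
  set σ : Fin r → (Fin sV ⊕ Fin m) := fun j => Classical.choose (hσex j) with hσ
  have hσspec : ∀ j, F ℓ₀ (σ j) = ((en j : ↥bset) : X) := fun j => Classical.choose_spec (hσex j)
  set w₀ : Fin r → X := fun j => F ℓ₀ (σ j) with hw₀
  have hw₀ind : LinearIndependent ℂ w₀ := by
    have h1 : LinearIndependent ℂ (fun (x : ↥bset) => (x : X)) := hbind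
    have h2 := h1.comp en en.injective
    have h3 : w₀ = (fun (x : ↥bset) => (x : X)) ∘ en := by
      funext j; exact hσspec j
    rw [h3]; exact h2
  -- left inverse g
  set Wmap : (Fin r → ℂ) →ₗ[ℂ] X :=
    ∑ j : Fin r, (LinearMap.proj j).smulRight (w₀ j) with hWmap
  have hWapp : ∀ c, Wmap c = ∑ j, c j • w₀ j := by
    intro c
    rw [hWmap]
    simp [LinearMap.sum_apply, LinearMap.smulRight_apply]
  have hWsingle : ∀ j, Wmap (Pi.single j 1) = w₀ j := by
    intro j
    rw [hWapp]
    rw [Finset.sum_eq_single j]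
    · simp
    · intro b _ hb
      simp [Pi.single_apply, hb.symm]
    · simp
  have hWker : LinearMap.ker Wmap = ⊥ := by
    rw [LinearMap.ker_eq_bot']
    intro c hc
    rw [hWapp] at hc
    have := Fintype.linearIndependent_iff.mp hw₀ind c hc
    funext j; exact this j
  obtain ⟨g, hg⟩ := LinearMap.exists_leftInverse_of_injective Wmap hWker
  have hgw₀ : ∀ j, g (w₀ j) = Pi.single j 1 := by
    intro j
    rw [← hWsingle j]
    have := LinearMap.congr_fun hg (Pi.single j 1)
    simpa using this
  -- the polynomial matrix
  set E : Fin (N+1) → (Fin (N+1) → ℂ) := fun a => fun j => if a = j then 1 else 0 with hE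
  set Pm : Matrix (Fin r) (Fin r) (MvPolynomial (Fin (N+1)) ℂ) :=
    Matrix.of (fun i j =>
      Sum.elim (fun iv => MvPolynomial.C (g ((bV iv : ↥V) : X) i))
        (fun jy => ∑ a, MvPolynomial.X a * MvPolynomial.C (g (s (E a) (bY jy)) i)) (σ j)) with hPm
  have hPmeval : ∀ ℓ i j, eval ℓ (Pm i j) = g (F ℓ (σ j)) i := by
    intro ℓ i j
    rw [hPm]
    simp only [Matrix.of_apply]
    rcases hcase : σ j with iv | jy
    · simp [hF]
    · simp only [Sum.elim_inr, map_sum, map_mul, eval_X, eval_C, hF]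
      have h1 : s ℓ = ∑ a, ℓ a • s (E a) := by
        have := LinearMap.pi_apply_eq_sum_univ s ℓ
        exact this
      rw [h1]
      simp [LinearMap.sum_apply, LinearMap.smul_apply, map_sum, map_smul, Finset.sum_apply,
        Pi.smul_apply, smul_eq_mul]
  set p := Pm.det with hp
  have hevaldet : ∀ ℓ, eval ℓ p = (Matrix.of (fun i j => g (F ℓ (σ j)) i)).det := by
    intro ℓ
    rw [hp]
    have h1 := RingHom.map_det (MvPolynomial.eval ℓ) Pm
    rw [h1]
    congr 1
    ext i j
    simp [RingHom.mapMatrix_apply, Matrix.map_apply, hPmeval]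
  have hdet0 : eval ℓ₀ p = 1 := by
    rw [hevaldet]
    have h1 : (Matrix.of (fun i j => g (F ℓ₀ (σ j)) i)) = (1 : Matrix (Fin r) (Fin r) ℂ) := by
      ext i j
      have := hgw₀ j
      rw [Matrix.of_apply]
      rw [show F ℓ₀ (σ j) = w₀ j from rfl, this]
      rw [Matrix.one_apply, Pi.single_apply]
    rw [h1, Matrix.det_one]
  have hpne : p ≠ 0 := by
    intro h0
    rw [h0] at hdet0
    simp at hdet0
  refine ⟨ℓ₀, p, hpne, hmax, ?_⟩
  intro ℓ hℓ
  refine le_antisymm (hmax ℓ) ?_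
  -- eval ℓ p ≠ 0 ⇒ the vectors F ℓ ∘ σ are independent
  rw [hevaldet] at hℓ
  set Mℓ := Matrix.of (fun i j => g (F ℓ (σ j)) i) with hMℓ
  have hcolind : LinearIndependent ℂ (fun j => g (F ℓ (σ j))) := by
    rw [Fintype.linearIndependent_iff]
    intro c hc
    have hmv : Mℓ.mulVec c = 0 := by
      funext i
      have h3 := congr_fun hc i
      simp only [Finset.sum_apply, Pi.smul_apply, smul_eq_mul, Pi.zero_apply] at h3
      have hg2 : Mℓ.mulVec c i = ∑ j, c j * g (F ℓ (σ j)) i := by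
        simp [Matrix.mulVec, dotProduct, hMℓ, mul_comm]
      simpa [hg2] using h3
    have := Matrix.eq_zero_of_mulVec_eq_zero hℓ hmv
    intro j
    exact congr_fun this j
  have hind : LinearIndependent ℂ (F ℓ ∘ σ) := LinearIndependent.of_comp g hcolind
  have hspan2 : Submodule.span ℂ (Set.range (F ℓ ∘ σ)) ≤ V ⊔ LinearMap.range (s ℓ) := by
    rw [← hspan ℓ]
    apply Submodule.span_mono
    rw [Set.range_comp]
    exact Set.image_subset_range _ _
  have hfr : Module.finrank ℂ ↥(Submodule.span ℂ (Set.range (F ℓ ∘ σ))) = r :=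
    by rw [finrank_span_eq_card hind, Fintype.card_fin]
  calc T ℓ₀ = r := rfl
  _ = Module.finrank ℂ ↥(Submodule.span ℂ (Set.range (F ℓ ∘ σ))) := hfr.symm
  _ ≤ Module.finrank ℂ ↥(V ⊔ LinearMap.range (s ℓ)) := Submodule.finrank_mono hspan2


/-- Abstract model for the global sections of the twists of a Castelnuovo–Mumford
regular coherent sheaf `M` on projective space `P^N` over an algebraically closed field
of characteristic `0` (we work over `ℂ`).  The space `H0 e` plays the role of
`H^0(P^N, M(e))`, the space of linear forms `H^0(O_{P^N}(1))` is `Fin (N+1) → ℂ`, and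
`smul e` is the multiplication map `H^0(O(1)) ⊗ H^0(M(e)) → H^0(M(e+1))` (bilinear, and
commutative in the two linear forms, so that `⨁ H0 e` is a graded module over the
polynomial ring).  Castelnuovo–Mumford regularity of `M` is recorded through the
section-level properties it guarantees and which are its working definition here
(Mumford):
* `mult_surjective`: the multiplication maps `H^0(M(e)) ⊗ H^0(O(1)) → H^0(M(e+1))` are
  surjective for all `e ≥ 0`;
* `generic_exact`: for a generic hyperplane `H = {ℓ = 0}` (all `ℓ` in the nonvanishing
  locus of some nonzero polynomial `p` on the space of linear forms) and each `e ≥ 0`,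
  the restriction sequence `0 → H^0(M(e)) → H^0(M(e+1)) → H^0(M_H(e+1)) → 0` is
  exact; the first map is multiplication by `ℓ`, so `H^0(M_H(e+1))` is canonically
  identified with `H^0(M(e+1)) / ℓ·H^0(M(e))` (and that identification is used below to
  model sections of the restricted sheaf `M_H`). -/
structure CMRegularSections (N : ℕ) where
  H0 : ℕ → Type
  [acg : ∀ e, AddCommGroup (H0 e)]
  [mod : ∀ e, Module ℂ (H0 e)]
  [fin : ∀ e, FiniteDimensional ℂ (H0 e)]
  smul : ∀ e, (Fin (N + 1) → ℂ) →ₗ[ℂ] H0 e →ₗ[ℂ] H0 (e + 1)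
  smul_comm : ∀ e ℓ ℓ' x, smul (e + 1) ℓ (smul e ℓ' x) = smul (e + 1) ℓ' (smul e ℓ x)
  mult_surjective : ∀ e, (⨆ ℓ : Fin (N + 1) → ℂ, LinearMap.range (smul e ℓ)) = ⊤
  generic_exact : ∃ p : MvPolynomial (Fin (N + 1)) ℂ, p ≠ 0 ∧
    ∀ ℓ : Fin (N + 1) → ℂ, MvPolynomial.eval ℓ p ≠ 0 →
      ∀ e, Function.Injective (smul e ℓ)

attribute [instance] CMRegularSections.acg CMRegularSections.mod CMRegularSections.fin


-- generic quotient-rank lemmas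
section QuotRank
variable {X Y : Type} [AddCommGroup X] [Module ℂ X] [FiniteDimensional ℂ X]
  [AddCommGroup Y] [Module ℂ Y] [FiniteDimensional ℂ Y]

lemma quot_rank_mono {U U' : Submodule ℂ X} (h : U ≤ U') :
    finrank ℂ (X ⧸ U') ≤ finrank ℂ (X ⧸ U) := by
  have h1 := Submodule.finrank_quotient_add_finrank U
  have h2 := Submodule.finrank_quotient_add_finrank U'
  have h3 : finrank ℂ ↥U ≤ finrank ℂ ↥U' := Submodule.finrank_mono h
  omega

lemma eq_of_quot_rank_eq {U U' : Submodule ℂ X} (h : U ≤ U')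
    (heq : finrank ℂ (X ⧸ U') = finrank ℂ (X ⧸ U)) : U' = U := by
  have h1 := Submodule.finrank_quotient_add_finrank U
  have h2 := Submodule.finrank_quotient_add_finrank U'
  exact (Submodule.eq_of_le_of_finrank_le h (by omega)).symm

lemma quot_top_rank : finrank ℂ (X ⧸ (⊤ : Submodule ℂ X)) = 0 := by
  have h := Submodule.finrank_quotient_add_finrank (⊤ : Submodule ℂ X)
  have h2 : finrank ℂ (↥(⊤ : Submodule ℂ X)) = finrank ℂ X := finrank_top ℂ X
  omega

/-- Step 5: codimension of the preimage under an injective map. -/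
lemma comap_codim (f : Y →ₗ[ℂ] X) (hf : Function.Injective f) (V : Submodule ℂ X) :
    finrank ℂ (X ⧸ V)
      = finrank ℂ (X ⧸ (V ⊔ LinearMap.range f)) + finrank ℂ (Y ⧸ (V.comap f)) := by
  have h1 := Submodule.finrank_quotient_add_finrank V
  have h2 := Submodule.finrank_quotient_add_finrank (V ⊔ LinearMap.range f)
  have h3 := Submodule.finrank_quotient_add_finrank (V.comap f)
  have h4 := Submodule.finrank_sup_add_finrank_inf_eq V (LinearMap.range f)
  have h5 : finrank ℂ ↥(LinearMap.range f) = finrank ℂ Y := LinearMap.finrank_range_of_inj hf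
  have h6 : finrank ℂ ↥(V.comap f) = finrank ℂ ↥(V ⊓ LinearMap.range f) := by
    have e1 := Submodule.equivMapOfInjective f hf (V.comap f)
    have e2 : Submodule.map f (V.comap f) = LinearMap.range f ⊓ V := Submodule.map_comap_eq f V
    rw [e2] at e1
    rw [e1.finrank_eq, inf_comm]
  omega

/-- Step 8: the key inequality. -/
lemma key_ineq (f : Y →ₗ[ℂ] X) (hf : Function.Injective f) (Z : Submodule ℂ X)
    (S : Submodule ℂ Y) (hS : S.map f ≤ Z) :
    finrank ℂ (X ⧸ Z) ≤ finrank ℂ (X ⧸ (Z ⊔ LinearMap.range f)) + finrank ℂ (Y ⧸ S) := by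
  have h1 := Submodule.finrank_quotient_add_finrank Z
  have h2 := Submodule.finrank_quotient_add_finrank (Z ⊔ LinearMap.range f)
  have h3 := Submodule.finrank_quotient_add_finrank S
  have h4 := Submodule.finrank_sup_add_finrank_inf_eq Z (LinearMap.range f)
  have h5 : finrank ℂ ↥(LinearMap.range f) = finrank ℂ Y := LinearMap.finrank_range_of_inj hf
  have h6 : finrank ℂ ↥S ≤ finrank ℂ ↥(Z ⊓ LinearMap.range f) := by
    have e1 := Submodule.equivMapOfInjective f hf S
    have h7 : S.map f ≤ Z ⊓ LinearMap.range f :=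
      le_inf hS (Submodule.map_le_iff_le_comap.mpr (fun y _ => ⟨y, rfl⟩))
    rw [e1.finrank_eq]
    exact Submodule.finrank_mono h7
  omega

/-- Translation between the double quotient and the quotient by the sup. -/
lemma double_quot_rank (R V : Submodule ℂ X) :
    finrank ℂ ((X ⧸ R) ⧸ Submodule.map R.mkQ V) = finrank ℂ (X ⧸ (V ⊔ R)) := by
  have h1 : Submodule.map R.mkQ V = Submodule.map R.mkQ (R ⊔ V) := by
    rw [Submodule.map_sup]
    have h2 : Submodule.map R.mkQ R = ⊥ := by
      rw [Submodule.eq_bot_iff]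
      rintro x ⟨y, hy, rfl⟩
      simp only [Submodule.mkQ_apply, Submodule.Quotient.mk_eq_zero]
      exact hy
    rw [h2, bot_sup_eq]
  rw [h1]
  have e := Submodule.quotientQuotientEquivQuotient R (R ⊔ V) le_sup_left
  rw [e.finrank_eq, sup_comm]

/-- density: if the range of `s ℓ` lies in `U` for generic `ℓ`, it does for all `ℓ`. -/
lemma range_le_of_generic {N : ℕ} (s : (Fin (N+1) → ℂ) →ₗ[ℂ] Y →ₗ[ℂ] X)
    (U : Submodule ℂ X) (p : MvPolynomial (Fin (N+1)) ℂ) (hp : p ≠ 0)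
    (h : ∀ ℓ, eval ℓ p ≠ 0 → LinearMap.range (s ℓ) ≤ U) :
    ∀ ℓ, LinearMap.range (s ℓ) ≤ U := by
  classical
  intro l0
  rintro _ ⟨x, rfl⟩
  -- the set of ℓ with s ℓ x ∈ U is a submodule containing the locus p ≠ 0
  set W : Submodule ℂ (Fin (N+1) → ℂ) := Submodule.comap (s.flip x) U with hW
  have hWin : ∀ ℓ, eval ℓ p ≠ 0 → ℓ ∈ W := by
    intro ℓ hℓ
    exact h ℓ hℓ ⟨x, rfl⟩
  have hWtop : W = ⊤ := by
    by_contra hcon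
    have hlt : W < ⊤ := lt_top_iff_ne_top.mpr hcon
    have : Nontrivial ((Fin (N+1) → ℂ) ⧸ W) := Submodule.Quotient.nontrivial_iff.mpr hlt.ne
    have hk : 0 < finrank ℂ ((Fin (N+1) → ℂ) ⧸ W) := finrank_pos
    set bQ := finBasis ℂ ((Fin (N+1) → ℂ) ⧸ W) with hbQ
    set i0 : Fin (finrank ℂ ((Fin (N+1) → ℂ) ⧸ W)) := ⟨0, hk⟩ with hi0
    set ψ : (Fin (N+1) → ℂ) →ₗ[ℂ] ℂ := (bQ.coord i0) ∘ₗ W.mkQ with hψ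
    obtain ⟨z, hz⟩ := Submodule.Quotient.mk_surjective W (bQ i0)
    have hψz : ψ z = 1 := by
      rw [hψ]
      simp only [LinearMap.comp_apply, Submodule.mkQ_apply, hz]
      simp [Basis.coord_apply]
    have hψW : ∀ w ∈ W, ψ w = 0 := by
      intro w hw
      rw [hψ]
      simp only [LinearMap.comp_apply, Submodule.mkQ_apply]
      rw [(Submodule.Quotient.mk_eq_zero W).mpr hw]
      simp
    set q : MvPolynomial (Fin (N+1)) ℂ :=
      ∑ a, MvPolynomial.C (ψ (fun j => if a = j then 1 else 0)) * MvPolynomial.X a with hq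
    have hqeval : ∀ ℓ, eval ℓ q = ψ ℓ := by
      intro ℓ
      rw [hq]
      have h1 := LinearMap.pi_apply_eq_sum_univ ψ ℓ
      rw [h1]
      simp [smul_eq_mul, mul_comm]
    have hq0 : q = 0 := by
      apply poly_zero_of_vanish hp
      intro ℓ hℓ
      rw [hqeval]
      exact hψW ℓ (hWin ℓ hℓ)
    have : ψ z = 0 := by rw [← hqeval, hq0]; simp
    rw [hψz] at this
    exact one_ne_zero this
  have : l0 ∈ W := hWtop ▸ Submodule.mem_top
  exact this

end QuotRank

/-- Lemma A: the generic codimension drops strictly. -/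
lemma dropA (N e : ℕ) (M : CMRegularSections N) (V : Submodule ℂ (M.H0 (e+1))) (c : ℕ)
    (hc : finrank ℂ (M.H0 (e+1) ⧸ V) = c) (hcpos : 1 ≤ c) :
    ∃ (c₁ : ℕ) (p : MvPolynomial (Fin (N+1)) ℂ), p ≠ 0 ∧ c₁ + 1 ≤ c ∧
      (∀ ℓ, eval ℓ p ≠ 0 → (∀ e', Function.Injective (M.smul e' ℓ))) ∧
      (∀ ℓ, eval ℓ p ≠ 0 →
        finrank ℂ (M.H0 (e+1) ⧸ (V ⊔ LinearMap.range (M.smul e ℓ))) = c₁) := by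
  obtain ⟨ℓ₀, p₁, hp₁, hmax, hgen⟩ := generic_sup_rank N (M.smul e) V
  obtain ⟨p₀, hp₀, hinj⟩ := M.generic_exact
  set c₁ := finrank ℂ (M.H0 (e+1) ⧸ (V ⊔ LinearMap.range (M.smul e ℓ₀))) with hc₁
  have hquoteq : ∀ ℓ, eval ℓ p₁ ≠ 0 →
      finrank ℂ (M.H0 (e+1) ⧸ (V ⊔ LinearMap.range (M.smul e ℓ))) = c₁ := by
    intro ℓ hℓ
    have h1 := hgen ℓ hℓ
    have h2 := Submodule.finrank_quotient_add_finrank (V ⊔ LinearMap.range (M.smul e ℓ))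
    have h3 := Submodule.finrank_quotient_add_finrank (V ⊔ LinearMap.range (M.smul e ℓ₀))
    omega
  have hc₁lt : c₁ + 1 ≤ c := by
    rcases Nat.lt_or_ge (c₁ + 1) (c + 1) with h | h
    · omega
    · exfalso
      have hc₁le : c₁ ≤ c := by
        rw [hc₁, ← hc]
        exact quot_rank_mono le_sup_left
      have hc₁c : c₁ = c := by omega
      have hVtop : V = ⊤ := by
        have hle : ∀ ℓ, LinearMap.range (M.smul e ℓ) ≤ V := by
          apply range_le_of_generic (M.smul e) V p₁ hp₁
          intro ℓ hℓ
          have h1 : V ⊔ LinearMap.range (M.smul e ℓ) = V := by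
            apply eq_of_quot_rank_eq le_sup_left
            rw [hquoteq ℓ hℓ, hc₁c, hc]
          rw [← h1]
          exact le_sup_right
        have : (⨆ ℓ, LinearMap.range (M.smul e ℓ)) ≤ V := iSup_le hle
        rw [M.mult_surjective e] at this
        exact top_le_iff.mp this
      rw [hVtop, quot_top_rank] at hc
      omega
  refine ⟨c₁, p₁ * p₀, mul_ne_zero hp₁ hp₀, hc₁lt, ?_, ?_⟩
  · intro ℓ hℓ
    apply hinj
    intro h0
    rw [map_mul, h0, mul_zero] at hℓ
    exact hℓ rfl
  · intro ℓ hℓ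
    apply hquoteq
    intro h0
    rw [map_mul, h0, zero_mul] at hℓ
    exact hℓ rfl

/-- The main induction. -/
theorem aux : ∀ (e c N : ℕ) (M : CMRegularSections N)
    (V : Submodule ℂ (M.H0 (e + 1))), finrank ℂ (M.H0 (e+1) ⧸ V) = c →
    ∃ p : MvPolynomial (Fin (N + 1)) ℂ, p ≠ 0 ∧
      ∀ ℓ, eval ℓ p ≠ 0 →
        finrank ℂ (M.H0 (e+1) ⧸ (V ⊔ LinearMap.range (M.smul e ℓ))) ≤ mSub c (e+1) := by
  intro e
  induction e with
  | zero =>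
    intro c N M V hc
    rcases Nat.eq_zero_or_pos c with rfl | hcpos
    · refine ⟨1, one_ne_zero, fun ℓ _ => ?_⟩
      rw [mSub_zero]
      have := quot_rank_mono (le_sup_left : V ≤ V ⊔ LinearMap.range (M.smul 0 ℓ))
      omega
    · obtain ⟨c₁, p, hp, hc₁, _, hquot⟩ := dropA N 0 M V c hc hcpos
      refine ⟨p, hp, fun ℓ hℓ => ?_⟩
      rw [hquot ℓ hℓ]
      have h2 : mSub c (0+1) = mSub c 1 := rfl
      rw [h2]
      have := mSub_one_right hcpos
      omega
  | succ e ih =>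
    intro c
    induction c using Nat.strong_induction_on with
    | _ c ihc =>
    intro N M V hc
    rcases Nat.eq_zero_or_pos c with rfl | hcpos
    · refine ⟨1, one_ne_zero, fun ℓ _ => ?_⟩
      rw [mSub_zero]
      have := quot_rank_mono (le_sup_left : V ≤ V ⊔ LinearMap.range (M.smul (e+1) ℓ))
      omega
    obtain ⟨c₁, p, hp, hc₁, hinjp, hquot⟩ := dropA N (e+1) M V c hc hcpos
    -- choose a fixed generic ℓ'
    obtain ⟨ℓ', hℓ'⟩ := exists_eval_ne_zero hp
    have hinj' : Function.Injective (M.smul (e+1) ℓ') := hinjp ℓ' hℓ' (e+1)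
    set f := M.smul (e+1) ℓ' with hf
    set V' : Submodule ℂ (M.H0 (e+1)) := V.comap f with hV'
    set Vt : Submodule ℂ (M.H0 (e+2)) := V ⊔ LinearMap.range f with hVt
    have hVtc : finrank ℂ (M.H0 (e+2) ⧸ Vt) = c₁ := hquot ℓ' hℓ'
    have hV'c : finrank ℂ (M.H0 (e+1) ⧸ V') = c - c₁ := by
      have h1 : finrank ℂ (M.H0 (e+2) ⧸ V)
          = finrank ℂ (M.H0 (e+2) ⧸ Vt) + finrank ℂ (M.H0 (e+1) ⧸ V') :=
        comap_codim f hinj' V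
      rw [hc, hVtc] at h1
      omega
    -- inner IH applied to Vt (codim c₁ < c)
    obtain ⟨q₁, hq₁, hq₁bound⟩ := ihc c₁ (by omega) N M Vt hVtc
    -- outer IH applied to V' (degree e+1)
    obtain ⟨q₂, hq₂, hq₂bound⟩ := ih (c - c₁) N M V' hV'c
    -- evaluate everything at a common generic point ℓ*
    obtain ⟨ℓs, hℓs⟩ := exists_eval_ne_zero (mul_ne_zero (mul_ne_zero hp hq₁) hq₂)
    rw [map_mul, map_mul] at hℓs
    have hℓsp : eval ℓs p ≠ 0 := fun h0 => hℓs (by rw [h0, zero_mul, zero_mul])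
    have hℓsq₁ : eval ℓs q₁ ≠ 0 := fun h0 => hℓs (by rw [h0, mul_zero, zero_mul])
    have hℓsq₂ : eval ℓs q₂ ≠ 0 := fun h0 => hℓs (by rw [h0, mul_zero])
    -- the key inequality at ℓ*
    have hkey : c₁ ≤ finrank ℂ (M.H0 (e+2) ⧸ (Vt ⊔ LinearMap.range (M.smul (e+1) ℓs)))
        + finrank ℂ (M.H0 (e+1) ⧸ (V' ⊔ LinearMap.range (M.smul e ℓs))) := by
      have hmap : (V' ⊔ LinearMap.range (M.smul e ℓs)).map f
          ≤ V ⊔ LinearMap.range (M.smul (e+1) ℓs) := by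
        rw [Submodule.map_sup]
        apply sup_le
        · exact le_trans (Submodule.map_comap_le f V) le_sup_left
        · rintro _ ⟨_, ⟨y, rfl⟩, rfl⟩
          apply Submodule.mem_sup_right
          exact ⟨M.smul e ℓ' y, (M.smul_comm e ℓ' ℓs y).symm⟩
      have h1 := key_ineq f hinj' (V ⊔ LinearMap.range (M.smul (e+1) ℓs))
        (V' ⊔ LinearMap.range (M.smul e ℓs)) hmap
      have h2 : V ⊔ LinearMap.range (M.smul (e+1) ℓs) ⊔ LinearMap.range f
          = Vt ⊔ LinearMap.range (M.smul (e+1) ℓs) := by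
        rw [hVt]
        rw [sup_right_comm]
      rw [h2] at h1
      rw [hquot ℓs hℓsp] at h1
      exact h1
    have hbound : c₁ ≤ mSub c₁ (e+2) + mSub (c - c₁) (e+1) := by
      have h1 : finrank ℂ (M.H0 (e+2) ⧸ (Vt ⊔ LinearMap.range (M.smul (e+1) ℓs)))
          ≤ mSub c₁ (e+2) := hq₁bound ℓs hℓsq₁
      have h2 : finrank ℂ (M.H0 (e+1) ⧸ (V' ⊔ LinearMap.range (M.smul e ℓs)))
          ≤ mSub (c - c₁) (e+1) := hq₂bound ℓs hℓsq₂
      omega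
    have hfinal : c₁ ≤ mSub c (e+2) := by
      have := green_L (a := c₁) (b := c - c₁) (D := e+1) (by omega) hbound
      rw [show c₁ + (c - c₁) = c by omega] at this
      exact this
    refine ⟨p, hp, fun ℓ hℓ => ?_⟩
    rw [hquot ℓ hℓ]
    exact hfinal


/-- **Restriction to a generic hyperplane.**
Let `M` be a Castelnuovo–Mumford regular coherent sheaf on `P^N` (modelled by
`CMRegularSections N`), let `d = e + 1 ≥ 1` and let `V ⊆ H^0(M(d))` be a subspace of
codimension `c`.  For a generic hyperplane `H = {ℓ = 0}` (all `ℓ` in the nonvanishing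
locus of some nonzero polynomial on the space of linear forms), the image `V_H` of `V`
under the restriction map `H^0(M(d)) → H^0(M_H(d))` has codimension at most `c_{<d>}`
in `H^0(M_H(d))`.  Here, by Castelnuovo–Mumford regularity, `H^0(M_H(d))` is
canonically identified with the cokernel `H^0(M(d)) / ℓ·H^0(M(d-1))` of multiplication
by `ℓ`, and the restriction map with the quotient projection. -/
theorem restriction_codim_le_mSub (N e c : ℕ)
    (M : CMRegularSections N) (V : Submodule ℂ (M.H0 (e + 1)))
    (hc : Module.finrank ℂ (M.H0 (e + 1) ⧸ V) = c) :
    ∃ p : MvPolynomial (Fin (N + 1)) ℂ, p ≠ 0 ∧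
      ∀ ℓ : Fin (N + 1) → ℂ, MvPolynomial.eval ℓ p ≠ 0 →
        Module.finrank ℂ
            ((M.H0 (e + 1) ⧸ LinearMap.range (M.smul e ℓ)) ⧸
              Submodule.map (LinearMap.range (M.smul e ℓ)).mkQ V)
          ≤ mSub c (e + 1) := by
  obtain ⟨p, hp, hbound⟩ := aux e c N M V hc
  refine ⟨p, hp, fun ℓ hℓ => ?_⟩
  rw [double_quot_rank]
  exact hbound ℓ hℓ

end
end

section
/- Let d ≥ 1 and c ≥ 0, where for c ≥ 1 we use the Macaulay representation c = Σ_{i=f}^{d} C(k_i, i). Then c + (c_{<d>})^{<d>} ≤ c^{<d>}. -/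
/-- For `1 ≤ d < n`, `n ≤ C(n, d)`. -/
lemma aux_choose_ge_self : ∀ n d : ℕ, 1 ≤ d → d < n → n ≤ n.choose d := by
  intro n
  induction n with
  | zero => intro d h1 h2; omega
  | succ n ih =>
    intro d h1 h2
    rcases Nat.eq_or_lt_of_le h1 with h | h
    · rw [← h, Nat.choose_one_right]
    · obtain ⟨e, rfl⟩ : ∃ e, d = e + 1 := ⟨d - 1, by omega⟩
      have hp : (n + 1).choose (e + 1) = n.choose e + n.choose (e + 1) :=
        Nat.choose_succ_succ' n e
      have h3 := ih e (by omega) (by omega)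
      have hpos : 0 < n.choose (e + 1) := Nat.choose_pos (by omega)
      omega

lemma aux_maxBin_ge {c d : ℕ} (hc : 0 < c) : d ≤ maxBin c d :=
  Nat.le_findGreatest (by omega) (by simp only [Nat.choose_self]; exact hc)

lemma aux_maxBin_spec {c d : ℕ} (hc : 0 < c) : (maxBin c d).choose d ≤ c :=
  Nat.findGreatest_spec (P := fun m => m.choose d ≤ c) (n := c + d) (m := d)
    (by omega) (by simp only [Nat.choose_self]; exact hc)

lemma aux_maxBin_lt {c d : ℕ} (hc : 0 < c) (hd : 1 ≤ d) :
    c < (maxBin c d + 1).choose d := by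
  by_contra h
  push_neg at h
  have hk : d ≤ maxBin c d := aux_maxBin_ge hc
  have h1 : maxBin c d + 1 ≤ (maxBin c d + 1).choose d :=
    aux_choose_ge_self _ _ hd (by omega)
  exact absurd h
    (Nat.findGreatest_is_greatest (P := fun m => m.choose d ≤ c) (n := c + d)
      (k := maxBin c d + 1) (Nat.lt_succ_self _) (by omega))

lemma aux_maxBin_eq {x k d : ℕ} (hd : 1 ≤ d) (hk : d ≤ k)
    (h1 : k.choose d ≤ x) (h2 : x < (k + 1).choose d) : maxBin x d = k := by
  have hx : 0 < x := lt_of_lt_of_le (Nat.choose_pos hk) h1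
  have hkb : k ≤ x + d := by
    rcases Nat.eq_or_lt_of_le hk with h | h
    · omega
    · have := aux_choose_ge_self k d hd h
      omega
  have hge : k ≤ maxBin x d := Nat.le_findGreatest hkb h1
  have hle : maxBin x d ≤ k := by
    by_contra h
    push_neg at h
    have h3 : (k + 1).choose d ≤ (maxBin x d).choose d := Nat.choose_le_choose d (by omega)
    have h4 := aux_maxBin_spec (d := d) hx
    omega
  omega

lemma aux_mSub_eq_zero : ∀ d c : ℕ, c ≤ d → mSub c d = 0 := by
  intro d
  induction d with
  | zero => intro c hc; rfl
  | succ d ih =>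
    intro c hc
    by_cases hc0 : c = 0
    · simp [mSub, hc0]
    · have hm : maxBin c (d + 1) = d + 1 := by
        apply aux_maxBin_eq (by omega) (le_refl _)
        · simpa [Nat.choose_self] using Nat.one_le_iff_ne_zero.2 hc0
        · rw [Nat.choose_succ_self_right]; omega
      simp only [mSub, if_neg hc0, hm, Nat.add_sub_cancel, Nat.choose_self,
        Nat.choose_succ_self_right]
      rw [Nat.choose_eq_zero_of_lt (by omega), ih (c - 1) (by omega)]

lemma aux_le_mUp : ∀ d c : ℕ, c ≤ d → c ≤ mUp c d := by
  intro d
  induction d with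
  | zero => intro c hc; omega
  | succ d ih =>
    intro c hc
    by_cases hc0 : c = 0
    · omega
    · have hm : maxBin c (d + 1) = d + 1 := by
        apply aux_maxBin_eq (by omega) (le_refl _)
        · simpa [Nat.choose_self] using Nat.one_le_iff_ne_zero.2 hc0
        · rw [Nat.choose_succ_self_right]; omega
      simp only [mUp, if_neg hc0, hm, Nat.choose_self]
      have := ih (c - 1) (by omega)
      omega

lemma aux_mSub_lt : ∀ e x m : ℕ, e < m → x < m.choose e → mSub x e < (m - 1).choose e := by
  intro e
  induction e with
  | zero =>
    intro x m _ _
    simp [mSub, Nat.choose_zero_right]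
  | succ e ih =>
    intro x m hem hx
    by_cases hx0 : x = 0
    · have : 0 < (m - 1).choose (e + 1) := Nat.choose_pos (by omega)
      simpa [mSub, hx0] using this
    · set k := maxBin x (e + 1) with hk
      have hx1 : 0 < x := Nat.pos_of_ne_zero hx0
      have hke : e + 1 ≤ k := aux_maxBin_ge hx1
      have hspec : k.choose (e + 1) ≤ x := aux_maxBin_spec hx1
      have hklt : k < m := by
        by_contra h
        push_neg at h
        have := Nat.choose_le_choose (e + 1) h
        omega
      have hlt : x < (k + 1).choose (e + 1) := aux_maxBin_lt hx1 (by omega)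
      have hpascal : (k + 1).choose (e + 1) = k.choose e + k.choose (e + 1) :=
        Nat.choose_succ_succ k e
      have hr : x - k.choose (e + 1) < k.choose e := by omega
      have hih := ih (x - k.choose (e + 1)) k (by omega) hr
      have hpascal2 : (k - 1 + 1).choose (e + 1) = (k - 1).choose e + (k - 1).choose (e + 1) :=
        Nat.choose_succ_succ (k - 1) e
      have hk1 : k - 1 + 1 = k := by omega
      have hle : k.choose (e + 1) ≤ (m - 1).choose (e + 1) :=
        Nat.choose_le_choose (e + 1) (by omega)
      simp only [mSub, if_neg hx0, ← hk]
      rw [hk1] at hpascal2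
      omega

/-- For all integers `c ≥ 0` and `d ≥ 1`, `c + (c_{<d>})^{<d>} ≤ c^{<d>}`. -/
theorem add_mUp_mSub_le_mUp (c d : ℕ) (hd : 1 ≤ d) :
    c + mUp (mSub c d) d ≤ mUp c d := by
  induction c using Nat.strong_induction_on generalizing d with
  | _ c IH =>
  obtain ⟨e, rfl⟩ : ∃ e, d = e + 1 := ⟨d - 1, by omega⟩
  by_cases hc0 : c = 0
  · simp [mSub, mUp, hc0]
  by_cases hcd : c ≤ e + 1
  · rw [aux_mSub_eq_zero _ _ hcd]
    simpa [mUp] using aux_le_mUp (e + 1) c hcd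
  -- main case : c > d
  push_neg at hcd
  set k := maxBin c (e + 1) with hkdef
  have hc1 : 0 < c := Nat.pos_of_ne_zero hc0
  have hkge : e + 2 ≤ k := by
    apply Nat.le_findGreatest (by omega)
    show (e + 2).choose (e + 1) ≤ c
    rw [Nat.choose_succ_self_right]
    omega
  have hspec : k.choose (e + 1) ≤ c := aux_maxBin_spec hc1
  have hlt : c < (k + 1).choose (e + 1) := aux_maxBin_lt hc1 (by omega)
  have hpascal : (k + 1).choose (e + 1) = k.choose e + k.choose (e + 1) :=
    Nat.choose_succ_succ k e
  set r := c - k.choose (e + 1) with hrdef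
  have hkpos : 0 < k.choose (e + 1) := Nat.choose_pos (by omega)
  have hrc : r < c := by omega
  have hre : r < k.choose e := by omega
  have hmsr : mSub r e < (k - 1).choose e := aux_mSub_lt e r k (by omega) hre
  have hs : mSub c (e + 1) = (k - 1).choose (e + 1) + mSub r e := by
    simp only [mSub, if_neg hc0, ← hkdef, ← hrdef]
  have hk1 : k - 1 + 1 = k := by omega
  have hpascal2 : k.choose (e + 1) = (k - 1).choose e + (k - 1).choose (e + 1) := by
    conv_lhs => rw [← hk1]
    exact Nat.choose_succ_succ (k - 1) e
  have hmb : maxBin (mSub c (e + 1)) (e + 1) = k - 1 := by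
    apply aux_maxBin_eq (by omega) (by omega)
    · rw [hs]; omega
    · rw [hs, hk1]; omega
  have hs0 : mSub c (e + 1) ≠ 0 := by
    have : 0 < (k - 1).choose (e + 1) := Nat.choose_pos (by omega)
    omega
  have harg : mSub c (e + 1) - (maxBin (mSub c (e + 1)) (e + 1)).choose (e + 1) = mSub r e := by
    rw [hmb, hs]
    omega
  have hmus : mUp (mSub c (e + 1)) (e + 1) =
      k.choose (e + 2) + mUp (mSub r e) e := by
    simp only [mUp, if_neg hs0, hmb, hk1, harg]
    rw [hs, Nat.add_sub_cancel_left]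
  have hmuc : mUp c (e + 1) = (k + 1).choose (e + 2) + mUp r e := by
    simp only [mUp, if_neg hc0, ← hkdef, ← hrdef]
  have hpascal3 : (k + 1).choose (e + 2) = k.choose (e + 1) + k.choose (e + 2) :=
    Nat.choose_succ_succ k (e + 1)
  have hrec : r + mUp (mSub r e) e ≤ mUp r e := by
    rcases Nat.eq_zero_or_pos e with rfl | he
    · have : r = 0 := by simpa using hre
      simp [this, mSub, mUp]
    · exact IH r hrc e he
  rw [hmus, hmuc, hpascal3]
  omega
end
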